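/- arXiv:2311.16582 — 9 statements merged into one kernel-verified Lean document; each statement's English description precedes it below -/
import Mathlib

section
/- Let N ≥ 1 and let p_1,…,p_N, x_1,…,x_N : ℝ → ℝ be differentiable functions with p_i(t) > 0 and x_1(t) > x_2(t) > ⋯ > x_N(t) for all t, satisfying the Camassa–Holm peakon system: dp_i/dt = −p_i Σ_{j=1}^{i−1} p_j e^{x_i−x_j} + p_i Σ_{j=i+1}^{N} p_j e^{x_j−x_i} and dx_i/dt = Σ_{j=1}^{i−1} p_j e^{x_i−x_j} + p_i + Σ_{j=i+1}^{N} p_j e^{x_j−x_i} for i = 1,…,N. Then the N×N symmetric matrix 𝒜(t) with entries 𝒜(t)_{ij} := √(p_i(t)p_j(t)) e^{(x_{max(i,j)}(t) − x_{min(i,j)}(t))/2} satisfies, entrywise, d𝒜(t)/dt = 𝒜(t)Π(𝒜(t)) − Π(𝒜(t))𝒜(t). -/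
/-!
Write 𝒜 as the semiseparable matrix 𝒜_ab = f_min(a,b) g_max(a,b), with f = √p e^{-x/2} and
g = √p e^{x/2}, and put w(a,k) = 𝒜_ak² / 𝒜_aa = p_k e^{x_max(a,k) - x_min(a,k)}. The peakon
equations say ṗ_a / p_a = ∑_k sgn(k - a) w(a,k) and ẋ_a = ∑_k w(a,k), so the logarithmic
derivative of 𝒜_ij = exp((log p_i + log p_j + x_max - x_min)/2) is half a sum over k. Since
Π(M)_ab = sgn(a - b) M_ab / 2, the (i,j) entry of 𝒜Π(𝒜) - Π(𝒜)𝒜 is the sum over k of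
𝒜_ik 𝒜_kj (sgn(k - i) + sgn(k - j)) / 2, and the two sums agree term by term: for a semiseparable
matrix with nonvanishing f, g this is a check over the relative positions of i, j and k.
-/

open Finset

/-- Strictly lower triangular part of a matrix. -/
def lowerPart {N : ℕ} (M : Matrix (Fin N) (Fin N) ℝ) : Matrix (Fin N) (Fin N) ℝ :=
  Matrix.of fun i j => if j < i then M i j else 0

/-- Strictly upper triangular part of a matrix. -/
def upperPart {N : ℕ} (M : Matrix (Fin N) (Fin N) ℝ) : Matrix (Fin N) (Fin N) ℝ :=
  Matrix.of fun i j => if i < j then M i j else 0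

/-- Π(M) := (1/2) M_< − (1/2) M_>. -/
noncomputable def PiMap {N : ℕ} (M : Matrix (Fin N) (Fin N) ℝ) : Matrix (Fin N) (Fin N) ℝ :=
  (1 / 2 : ℝ) • lowerPart M - (1 / 2 : ℝ) • upperPart M

/-- The semiseparable peakon matrix 𝒜(t). -/
noncomputable def calA {N : ℕ} (p x : Fin N → ℝ → ℝ) (t : ℝ) : Matrix (Fin N) (Fin N) ℝ :=
  Matrix.of fun i j =>
    Real.sqrt (p i t * p j t) * Real.exp ((x (max i j) t - x (min i j) t) / 2)

section OrdSign

variable {α : Type*} [LinearOrder α]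

def ordSign (a b : α) : ℝ :=
  if b < a then 1 else if a < b then -1 else 0

lemma ordSign_of_lt {a b : α} (h : b < a) : ordSign a b = 1 :=
  if_pos h

lemma ordSign_of_gt {a b : α} (h : a < b) : ordSign a b = -1 := by
  simp [ordSign, h, h.not_gt]

lemma ordSign_self (a : α) : ordSign a a = 0 := by
  simp [ordSign]

lemma ordSign_swap (a b : α) : ordSign b a = -ordSign a b := by
  unfold ordSign
  split_ifs <;> first | (exfalso; order) | norm_num

end OrdSign

section Sums

variable {ι M : Type*} [Fintype ι] [LinearOrder ι]

lemma sum_eq_sum_lt_add_add_sum_gt [AddCommMonoid M] (f : ι → M) (a : ι) :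
    ∑ k, f k = ∑ k ∈ univ.filter (· < a), f k + f a + ∑ k ∈ univ.filter (a < ·), f k := by
  calc ∑ k, f k
      = ∑ k, ((if k < a then f k else 0) + (if a = k then f k else 0) + if a < k then f k else 0) :=
        sum_congr rfl fun k _ => by
          rcases lt_trichotomy k a with h | rfl | h
          · simp [h, h.ne', h.not_gt]
          · simp
          · simp [h, h.ne, h.not_gt]
    _ = _ := by simp only [sum_add_distrib, sum_filter, sum_ite_eq, mem_univ, if_true]

lemma sum_ordSign_mul (f : ι → ℝ) (a : ι) :
    ∑ k, ordSign k a * f k = ∑ k ∈ univ.filter (a < ·), f k - ∑ k ∈ univ.filter (· < a), f k := by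
  rw [sum_filter, sum_filter, ← sum_sub_distrib]
  refine sum_congr rfl fun k _ => ?_
  unfold ordSign
  split_ifs <;> first | (exfalso; order) | ring

end Sums

lemma PiMap_apply {N : ℕ} (M : Matrix (Fin N) (Fin N) ℝ) (a b : Fin N) :
    PiMap M a b = ordSign a b / 2 * M a b := by
  simp only [PiMap, lowerPart, upperPart, ordSign, Matrix.sub_apply, Matrix.smul_apply,
    Matrix.of_apply, smul_eq_mul]
  split_ifs <;> first | (exfalso; order) | ring

lemma commutator_PiMap_apply {N : ℕ} (M : Matrix (Fin N) (Fin N) ℝ) (i j : Fin N) :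
    (M * PiMap M - PiMap M * M) i j = ∑ k, M i k * M k j * (ordSign k i + ordSign k j) / 2 := by
  simp only [Matrix.sub_apply, Matrix.mul_apply, PiMap_apply, ← sum_sub_distrib]
  exact sum_congr rfl fun k _ => by rw [ordSign_swap k i]; ring

section Semiseparable

variable {ι : Type*} [LinearOrder ι]

def semiseparable (f g : ι → ℝ) : Matrix ι ι ℝ :=
  Matrix.of fun a b => f (min a b) * g (max a b)

lemma semiseparable_apply_of_le {f g : ι → ℝ} {a b : ι} (h : a ≤ b) :
    semiseparable f g a b = f a * g b := by
  simp [semiseparable, h]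

lemma semiseparable_apply_of_ge {f g : ι → ℝ} {a b : ι} (h : b ≤ a) :
    semiseparable f g a b = f b * g a := by
  simp [semiseparable, h]

lemma semiseparable_comm (f g : ι → ℝ) (a b : ι) :
    semiseparable f g a b = semiseparable f g b a := by
  simp [semiseparable, min_comm, max_comm]

noncomputable def peakonWeight (M : Matrix ι ι ℝ) (a k : ι) : ℝ :=
  M a k ^ 2 / M a a

lemma semiseparable_mul_mul_ordSign {f g : ι → ℝ} (hf : ∀ a, f a ≠ 0) (hg : ∀ a, g a ≠ 0)
    (i j k : ι) :
    semiseparable f g i k * semiseparable f g k j * (ordSign k i + ordSign k j)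
      = semiseparable f g i j * (ordSign k i * peakonWeight (semiseparable f g) i k
        + ordSign k j * peakonWeight (semiseparable f g) j k
        + peakonWeight (semiseparable f g) (max i j) k
        - peakonWeight (semiseparable f g) (min i j) k) := by
  wlog hij : i ≤ j generalizing i j
  · have h := this j i (le_of_not_ge hij)
    rw [semiseparable_comm f g j k, semiseparable_comm f g k i, semiseparable_comm f g j i,
      max_comm, min_comm] at h
    linear_combination h
  have := hf i; have := hf j; have := hf k; have := hg i; have := hg j; have := hg k
  rcases lt_trichotomy k i with hki | hki | hki <;>
  rcases lt_trichotomy k j with hkj | hkj | hkj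
  all_goals first
    | (exfalso; order)
    | (subst_vars
       simp only [peakonWeight, semiseparable_apply_of_le, semiseparable_apply_of_ge, ordSign_of_lt,
         ordSign_of_gt, ordSign_self, max_eq_right, min_eq_left, le_refl, le_of_lt, *]
       field_simp
       ring)

end Semiseparable

lemma semiseparable_commutator_PiMap_apply {N : ℕ} {f g : Fin N → ℝ} (hf : ∀ a, f a ≠ 0)
    (hg : ∀ a, g a ≠ 0) (i j : Fin N) :
    (semiseparable f g * PiMap (semiseparable f g)
        - PiMap (semiseparable f g) * semiseparable f g) i j
      = semiseparable f g i j / 2 * ∑ k, (ordSign k i * peakonWeight (semiseparable f g) i k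
        + ordSign k j * peakonWeight (semiseparable f g) j k
        + peakonWeight (semiseparable f g) (max i j) k
        - peakonWeight (semiseparable f g) (min i j) k) := by
  rw [commutator_PiMap_apply, mul_sum]
  exact sum_congr rfl fun k _ => by rw [semiseparable_mul_mul_ordSign hf hg]; ring

section Peakon

variable {N : ℕ} {p x : Fin N → ℝ → ℝ} {t : ℝ}

lemma calA_eq_semiseparable (hp : ∀ a, 0 < p a t) :
    calA p x t = semiseparable (fun a => √(p a t) * Real.exp (-(x a t / 2)))
      (fun a => √(p a t) * Real.exp (x a t / 2)) := by
  ext a b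
  have hpp : p a t * p b t = p (min a b) t * p (max a b) t := by
    rcases le_total a b with h | h <;> simp [h, mul_comm]
  rw [calA, semiseparable, Matrix.of_apply, Matrix.of_apply, hpp, Real.sqrt_mul (hp _).le, sub_div,
    sub_eq_add_neg, Real.exp_add]
  ring

lemma calA_apply_self (hp : ∀ a, 0 < p a t) (a : Fin N) : calA p x t a a = p a t := by
  simp [calA, Real.sqrt_mul_self (hp a).le]

lemma peakonWeight_calA (hp : ∀ a, 0 < p a t) (a k : Fin N) :
    peakonWeight (calA p x t) a k = p k t * Real.exp (x (max a k) t - x (min a k) t) := by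
  rw [peakonWeight, calA_apply_self hp, calA, Matrix.of_apply, mul_pow,
    Real.sq_sqrt (mul_pos (hp a) (hp k)).le, ← Real.exp_nat_mul, Nat.cast_ofNat,
    mul_div_cancel₀ _ two_ne_zero]
  field_simp [(hp a).ne']

lemma calA_apply_eq_exp {i j : Fin N} (hpi : 0 < p i t) (hpj : 0 < p j t) :
    calA p x t i j
      = Real.exp ((Real.log (p i t) + Real.log (p j t) + x (max i j) t - x (min i j) t) / 2) := by
  rw [calA, Matrix.of_apply, Real.sqrt_eq_rpow, Real.rpow_def_of_pos (mul_pos hpi hpj),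
    Real.log_mul hpi.ne' hpj.ne', ← Real.exp_add]
  ring_nf

lemma hasDerivAt_calA (hp : ∀ a s, 0 < p a s) (hpd : ∀ a, DifferentiableAt ℝ (p a) t)
    (hxd : ∀ a, DifferentiableAt ℝ (x a) t) (i j : Fin N) :
    HasDerivAt (fun s => calA p x s i j)
      (calA p x t i j * ((deriv (p i) t / p i t + deriv (p j) t / p j t
        + deriv (x (max i j)) t - deriv (x (min i j)) t) / 2)) t := by
  simp only [calA_apply_eq_exp (hp i _) (hp j _)]
  exact (((((hpd i).hasDerivAt.log (hp i t).ne').add ((hpd j).hasDerivAt.log (hp j t).ne')).add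
    (hxd _).hasDerivAt).sub (hxd _).hasDerivAt).div_const 2 |>.exp

lemma sum_lt_eq_sum_peakonWeight_calA (hp : ∀ a, 0 < p a t) (a : Fin N) :
    ∑ k ∈ univ.filter (· < a), p k t * Real.exp (x a t - x k t)
      = ∑ k ∈ univ.filter (· < a), peakonWeight (calA p x t) a k :=
  sum_congr rfl fun k hk => by
    have hka := (mem_filter.1 hk).2.le
    rw [peakonWeight_calA hp, max_eq_left hka, min_eq_right hka]

lemma sum_gt_eq_sum_peakonWeight_calA (hp : ∀ a, 0 < p a t) (a : Fin N) :
    ∑ k ∈ univ.filter (a < ·), p k t * Real.exp (x k t - x a t)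
      = ∑ k ∈ univ.filter (a < ·), peakonWeight (calA p x t) a k :=
  sum_congr rfl fun k hk => by
    have hak := (mem_filter.1 hk).2.le
    rw [peakonWeight_calA hp, max_eq_right hak, min_eq_left hak]

end Peakon

theorem stmt0_general (N : ℕ) (p x : Fin N → ℝ → ℝ)
    (hpdiff : ∀ i, Differentiable ℝ (p i))
    (hxdiff : ∀ i, Differentiable ℝ (x i))
    (hppos : ∀ i t, 0 < p i t)
    (hpeq : ∀ (i : Fin N) (t : ℝ), deriv (p i) t =
      -(p i t) * ∑ j ∈ Finset.univ.filter (fun j => j < i),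
          p j t * Real.exp (x i t - x j t)
        + p i t * ∑ j ∈ Finset.univ.filter (fun j => i < j),
          p j t * Real.exp (x j t - x i t))
    (hxeq : ∀ (i : Fin N) (t : ℝ), deriv (x i) t =
      (∑ j ∈ Finset.univ.filter (fun j => j < i), p j t * Real.exp (x i t - x j t))
        + p i t
        + ∑ j ∈ Finset.univ.filter (fun j => i < j), p j t * Real.exp (x j t - x i t)) :
    ∀ (t : ℝ) (i j : Fin N),
      deriv (fun s => calA p x s i j) t
        = (calA p x t * PiMap (calA p x t) - PiMap (calA p x t) * calA p x t) i j := by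
  intro t i j
  have hp : ∀ a, 0 < p a t := fun a => hppos a t
  have hq : ∀ a, √(p a t) ≠ 0 := fun a => (Real.sqrt_pos.2 (hp a)).ne'
  have hrate : ∀ a, deriv (p a) t / p a t = ∑ k, ordSign k a * peakonWeight (calA p x t) a k := by
    intro a
    rw [hpeq, sum_ordSign_mul, sum_lt_eq_sum_peakonWeight_calA hp,
      sum_gt_eq_sum_peakonWeight_calA hp]
    field_simp [(hp a).ne']
    ring
  have hvel : ∀ a, deriv (x a) t = ∑ k, peakonWeight (calA p x t) a k := by
    intro a
    rw [hxeq, sum_eq_sum_lt_add_add_sum_gt _ a, sum_lt_eq_sum_peakonWeight_calA hp,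
      sum_gt_eq_sum_peakonWeight_calA hp, peakonWeight_calA hp a a]
    simp
  rw [(hasDerivAt_calA hppos (fun a => hpdiff a t) (fun a => hxdiff a t) i j).deriv,
    calA_eq_semiseparable hp,
    semiseparable_commutator_PiMap_apply (fun a => mul_ne_zero (hq a) (Real.exp_ne_zero _))
      (fun a => mul_ne_zero (hq a) (Real.exp_ne_zero _)),
    ← calA_eq_semiseparable hp, hrate, hrate, hvel, hvel]
  simp only [sum_add_distrib, sum_sub_distrib]
  ring

theorem stmt0 (N : ℕ) (hN : 1 ≤ N) (p x : Fin N → ℝ → ℝ)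
    (hpdiff : ∀ i, Differentiable ℝ (p i))
    (hxdiff : ∀ i, Differentiable ℝ (x i))
    (hppos : ∀ i t, 0 < p i t)
    (hxord : ∀ (i j : Fin N), i < j → ∀ t : ℝ, x j t < x i t)
    (hpeq : ∀ (i : Fin N) (t : ℝ), deriv (p i) t =
      -(p i t) * ∑ j ∈ Finset.univ.filter (fun j => j < i),
          p j t * Real.exp (x i t - x j t)
        + p i t * ∑ j ∈ Finset.univ.filter (fun j => i < j),
          p j t * Real.exp (x j t - x i t))
    (hxeq : ∀ (i : Fin N) (t : ℝ), deriv (x i) t =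
      (∑ j ∈ Finset.univ.filter (fun j => j < i), p j t * Real.exp (x i t - x j t))
        + p i t
        + ∑ j ∈ Finset.univ.filter (fun j => i < j), p j t * Real.exp (x j t - x i t)) :
    ∀ (t : ℝ) (i j : Fin N),
      deriv (fun s => calA p x s i j) t
        = (calA p x t * PiMap (calA p x t) - PiMap (calA p x t) * calA p x t) i j :=
  stmt0_general N p x hpdiff hxdiff hppos hpeq hxeq
end

section
/- Let N ≥ 1 and let (μ_i)_{i≥0} be a real sequence. For s ∈ {0,1} define the Hankel determinants τ_0^{(s)} := 1, τ_i^{(s)} := det(μ_{j+k+s})_{j,k=0}^{i−1}, and assume τ_i^{(0)} ≠ 0 and τ_i^{(1)} ≠ 0 for i = 1,…,N. For s ∈ {0,1} define monic polynomials φ_0^{(s)}(z) := 1 and, for 1 ≤ i ≤ N, φ_i^{(s)}(z) := (1/τ_i^{(s)}) det of the (i+1)×(i+1) matrix whose first i rows are (μ_{k+s}, μ_{k+1+s}, …, μ_{k+i+s}) for k = 0,…,i−1 and whose last row is (1, z, z², …, z^i). Set Q_i := τ_{i−1}^{(0)} τ_i^{(1)} / (τ_i^{(0)} τ_{i−1}^{(1)})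 for 1 ≤ i ≤ N and E_i := τ_{i+1}^{(0)} τ_{i−1}^{(1)} / (τ_i^{(0)} τ_i^{(1)}) for 0 ≤ i ≤ N−1 (so E_0 = 0 since τ_{−1} := 0). Then, as identities of polynomials in z: (a) z·φ_{i−1}^{(1)}(z) = φ_i^{(0)}(z) + Q_i φ_{i−1}^{(0)}(z) for i = 1,…,N; (b) φ_i^{(0)}(z) = φ_i^{(1)}(z) + E_i φ_{i−1}^{(1)}(z) for i = 0,…,N−1. -/
open Finset

/-- Hankel determinant τ_i^{(s)} of the shifted moment sequence (μ_{m+s}). -/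
noncomputable def tauS (μ : ℕ → ℝ) (s i : ℕ) : ℝ :=
  Matrix.det (Matrix.of fun j k : Fin i => μ (j.1 + k.1 + s))

/-- The monic orthogonal polynomial φ_i^{(s)}(z), defined as a determinant. -/
noncomputable def opolyS (μ : ℕ → ℝ) (s i : ℕ) (z : ℝ) : ℝ :=
  if i = 0 then 1 else
    (1 / tauS μ s i) *
      Matrix.det (Matrix.of fun k j : Fin (i + 1) =>
        if k.1 < i then μ (k.1 + j.1 + s) else z ^ j.1)

/-- Q_i := τ_{i−1}^{(0)} τ_i^{(1)} / (τ_i^{(0)} τ_{i−1}^{(1)}). -/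
noncomputable def Qcd (μ : ℕ → ℝ) (i : ℕ) : ℝ :=
  tauS μ 0 (i - 1) * tauS μ 1 i / (tauS μ 0 i * tauS μ 1 (i - 1))

/-- E_i := τ_{i+1}^{(0)} τ_{i−1}^{(1)} / (τ_i^{(0)} τ_i^{(1)}), with E_0 = 0. -/
noncomputable def Ecd (μ : ℕ → ℝ) (i : ℕ) : ℝ :=
  if i = 0 then 0 else tauS μ 0 (i + 1) * tauS μ 1 (i - 1) / (tauS μ 0 i * tauS μ 1 i)


noncomputable def Mrow (μ : ℕ → ℝ) (s i : ℕ) (r : Fin (i+1) → ℝ) :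
    Matrix (Fin (i+1)) (Fin (i+1)) ℝ :=
  Matrix.of fun k j => if k.1 < i then μ (k.1 + j.1 + s) else r j

noncomputable def cof (μ : ℕ → ℝ) (s i : ℕ) (j : Fin (i+1)) : ℝ :=
  (-1:ℝ)^(i + j.1) * Matrix.det (Matrix.of fun k l : Fin i => μ (k.1 + (j.succAbove l).1 + s))

lemma tau0 (μ : ℕ → ℝ) (s : ℕ) : tauS μ s 0 = 1 := by
  simp [tauS]

lemma expand_Mrow (μ : ℕ → ℝ) (s i : ℕ) (r : Fin (i+1) → ℝ) :
    (Mrow μ s i r).det = ∑ j : Fin (i+1), r j * cof μ s i j := by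
  rw [Matrix.det_succ_row (Mrow μ s i r) (Fin.last i)]
  refine Finset.sum_congr rfl fun j _ => ?_
  have h1 : Mrow μ s i r (Fin.last i) j = r j := by
    simp [Mrow, Fin.last]
  have h2 : ((Mrow μ s i r).submatrix (Fin.last i).succAbove j.succAbove).det =
      Matrix.det (Matrix.of fun k l : Fin i => μ (k.1 + (j.succAbove l).1 + s)) := by
    congr 1
    ext k l
    simp [Mrow, Matrix.submatrix, Fin.succAbove_last, Fin.castSucc, k.2]
  rw [h1, h2]
  simp [cof, Fin.last]
  ring

lemma Mrow_row_lt (μ : ℕ → ℝ) (s i k : ℕ) (hk : k < i) :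
    (Mrow μ s i (fun j => μ (k + j.1 + s))).det = 0 := by
  apply Matrix.det_zero_of_row_eq (i := (⟨k, Nat.lt_succ_of_lt hk⟩ : Fin (i+1)))
    (j := Fin.last i)
  · intro h
    have := congrArg Fin.val h
    simp [Fin.last] at this
    omega
  · funext j
    simp [Mrow, Fin.last, hk]

lemma Mrow_row_eq (μ : ℕ → ℝ) (s i : ℕ) :
    (Mrow μ s i (fun j => μ (i + j.1 + s))).det = tauS μ s (i+1) := by
  unfold tauS
  congr 1
  ext k j
  by_cases h : k.1 < i
  · simp [Mrow, h]
  · have : k.1 = i := by omega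
    simp [Mrow, h, this]

lemma moments_cof (μ : ℕ → ℝ) (s i k : ℕ) (hk : k ≤ i) :
    ∑ j : Fin (i+1), μ (k + j.1 + s) * cof μ s i j =
      if k < i then 0 else tauS μ s (i+1) := by
  rw [← expand_Mrow μ s i (fun j => μ (k + j.1 + s))]
  by_cases h : k < i
  · rw [if_pos h, Mrow_row_lt μ s i k h]
  · have : k = i := by omega
    rw [if_neg h, this, Mrow_row_eq]

lemma cof_last (μ : ℕ → ℝ) (s i : ℕ) : cof μ s i (Fin.last i) = tauS μ s i := by
  have hsign : ((-1:ℝ))^(i + (Fin.last i).1) = 1 := by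
    simp only [Fin.last]
    exact Even.neg_one_pow ⟨i, rfl⟩
  simp only [cof, hsign, one_mul, Fin.succAbove_last]
  rfl

noncomputable def phc (μ : ℕ → ℝ) (s i j : ℕ) : ℝ :=
  if h : j < i + 1 then (1 / tauS μ s i) * cof μ s i ⟨j, h⟩ else 0

lemma phc_zero (μ : ℕ → ℝ) (s i j : ℕ) (h : i + 1 ≤ j) : phc μ s i j = 0 := by
  rw [phc, dif_neg (by omega)]

lemma phc_top (μ : ℕ → ℝ) (s i : ℕ) (h : tauS μ s i ≠ 0) : phc μ s i i = 1 := by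
  rw [phc, dif_pos (Nat.lt_succ_self i)]
  have : (⟨i, Nat.lt_succ_self i⟩ : Fin (i+1)) = Fin.last i := rfl
  rw [this, cof_last]
  field_simp

lemma opoly_phc (μ : ℕ → ℝ) (s i : ℕ) (z : ℝ) :
    opolyS μ s i z = ∑ j ∈ range (i+1), phc μ s i j * z ^ j := by
  rcases Nat.eq_zero_or_pos i with h | h
  · subst h
    simp [opolyS, phc, cof, tau0]
  · rw [opolyS, if_neg (by omega)]
    have : (Matrix.of fun k j : Fin (i + 1) =>
        if k.1 < i then μ (k.1 + j.1 + s) else z ^ j.1) = Mrow μ s i (fun j => z ^ j.1) := rfl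
    rw [this, expand_Mrow, Finset.mul_sum]
    rw [← Fin.sum_univ_eq_sum_range (fun j => phc μ s i j * z ^ j) (i+1)]
    refine Finset.sum_congr rfl fun j _ => ?_
    rw [phc, dif_pos j.2]
    ring_nf

lemma moments_phc (μ : ℕ → ℝ) (s i k : ℕ) (hk : k ≤ i) :
    ∑ j ∈ range (i+1), μ (k + j + s) * phc μ s i j =
      if k < i then 0 else tauS μ s (i+1) / tauS μ s i := by
  rw [← Fin.sum_univ_eq_sum_range (fun j => μ (k + j + s) * phc μ s i j) (i+1)]
  have : ∀ j : Fin (i+1), μ (k + j.1 + s) * phc μ s i j.1 =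
      (1 / tauS μ s i) * (μ (k + j.1 + s) * cof μ s i j) := by
    intro j
    rw [phc, dif_pos j.2]
    ring_nf
  rw [Finset.sum_congr rfl (fun j _ => this j), ← Finset.mul_sum, moments_cof μ s i k hk]
  by_cases h : k < i <;> simp [h] <;> ring

lemma nondeg (μ : ℕ → ℝ) (s i : ℕ) (h : tauS μ s i ≠ 0) (v : ℕ → ℝ)
    (hmom : ∀ k, k < i → ∑ j ∈ range (i+1), μ (k + j + s) * v j = 0)
    (htop : v i = 0) : ∀ j, j < i + 1 → v j = 0 := by
  set H : Matrix (Fin i) (Fin i) ℝ := Matrix.of fun k l : Fin i => μ (k.1 + l.1 + s) with hH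
  have hdet : H.det ≠ 0 := h
  have hmul : H.mulVec (fun l => v l.1) = 0 := by
    funext k
    have := hmom k.1 k.2
    rw [Finset.sum_range_succ, htop, mul_zero, add_zero] at this
    rw [← Fin.sum_univ_eq_sum_range (fun j => μ (k.1 + j + s) * v j) i] at this
    simpa [Matrix.mulVec, dotProduct, H] using this
  have hv := Matrix.eq_zero_of_mulVec_eq_zero hdet hmul
  intro j hj
  rcases Nat.lt_or_ge j i with hji | hji
  · exact congrFun hv ⟨j, hji⟩
  · have : j = i := by omega
    rw [this]; exact htop

theorem stmt3 (N : ℕ) (hN : 1 ≤ N) (μ : ℕ → ℝ)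
    (h0 : ∀ i, 1 ≤ i → i ≤ N → tauS μ 0 i ≠ 0)
    (h1 : ∀ i, 1 ≤ i → i ≤ N → tauS μ 1 i ≠ 0) :
    (∀ i, 1 ≤ i → i ≤ N → ∀ z : ℝ,
      z * opolyS μ 1 (i - 1) z = opolyS μ 0 i z + Qcd μ i * opolyS μ 0 (i - 1) z) ∧
    (∀ i, i ≤ N - 1 → ∀ z : ℝ,
      opolyS μ 0 i z = opolyS μ 1 i z + Ecd μ i * opolyS μ 1 (i - 1) z) := by
  have h0' : ∀ i, i ≤ N → tauS μ 0 i ≠ 0 := by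
    intro i hi
    rcases Nat.eq_zero_or_pos i with h | h
    · rw [h, tau0]; norm_num
    · exact h0 i h hi
  have h1' : ∀ i, i ≤ N → tauS μ 1 i ≠ 0 := by
    intro i hi
    rcases Nat.eq_zero_or_pos i with h | h
    · rw [h, tau0]; norm_num
    · exact h1 i h hi
  constructor
  · -- part (a)
    intro i h1i hiN z
    obtain ⟨m, rfl⟩ : ∃ m, i = m + 1 := ⟨i - 1, by omega⟩
    simp only [Nat.add_sub_cancel]
    have hτ0m : tauS μ 0 m ≠ 0 := h0' m (by omega)
    have hτ0m1 : tauS μ 0 (m+1) ≠ 0 := h0' (m+1) hiN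
    have hτ1m : tauS μ 1 m ≠ 0 := h1' m (by omega)
    set Q := Qcd μ (m+1) with hQ
    set aa : ℕ → ℝ := fun j => if 1 ≤ j then phc μ 1 m (j-1) else 0 with haa
    set w : ℕ → ℝ := fun j => aa j - phc μ 0 (m+1) j - Q * phc μ 0 m j with hw
    have hwzero : ∀ j, j < m + 2 → w j = 0 := by
      apply nondeg μ 0 (m+1) hτ0m1 w
      · intro k hk
        have S1 : ∑ j ∈ range (m+2), μ (k + j + 0) * aa j
            = ∑ j ∈ range (m+1), μ (k + j + 1) * phc μ 1 m j := by
          rw [Finset.sum_range_succ']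
          simp only [haa, Nat.add_sub_cancel]
          rw [if_neg (by omega)]
          simp only [mul_zero, add_zero]
          refine Finset.sum_congr rfl fun j _ => ?_
          rw [if_pos (by omega)]
          rw [show k+(j+1) = k+j+1 from by omega]
        have S3 : ∑ j ∈ range (m+2), μ (k + j + 0) * phc μ 0 m j
            = ∑ j ∈ range (m+1), μ (k + j + 0) * phc μ 0 m j := by
          rw [Finset.sum_range_succ, phc_zero μ 0 m (m+1) (le_refl _), mul_zero, add_zero]
        have expand : ∑ j ∈ range (m+2), μ (k + j + 0) * w j
            = (∑ j ∈ range (m+2), μ (k + j + 0) * aa j)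
              - (∑ j ∈ range (m+2), μ (k + j + 0) * phc μ 0 (m+1) j)
              - Q * (∑ j ∈ range (m+2), μ (k + j + 0) * phc μ 0 m j) := by
          rw [Finset.mul_sum, ← Finset.sum_sub_distrib, ← Finset.sum_sub_distrib]
          refine Finset.sum_congr rfl fun j _ => ?_
          simp only [hw]; ring
        rw [expand, S1, S3, moments_phc μ 0 (m+1) k (by omega),
          moments_phc μ 0 m k (by omega), moments_phc μ 1 m k (by omega),
          if_pos (by omega : k < m + 1)]
        by_cases hkm : k < m
        · rw [if_pos hkm, if_pos hkm]; ring
        · have : k = m := by omega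
          rw [if_neg hkm, if_neg hkm, hQ, Qcd, Nat.add_sub_cancel]
          field_simp
          ring
      · simp only [hw, haa]
        rw [if_pos (by omega), Nat.add_sub_cancel, phc_top μ 1 m hτ1m,
          phc_top μ 0 (m+1) hτ0m1, phc_zero μ 0 m (m+1) (le_refl _)]
        ring
    rw [opoly_phc, opoly_phc, opoly_phc]
    have eL : ∑ j ∈ range (m+2), aa j * z ^ j
        = z * ∑ j ∈ range (m+1), phc μ 1 m j * z ^ j := by
      rw [Finset.sum_range_succ']
      simp only [haa, Nat.add_sub_cancel]
      rw [if_neg (by omega)]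
      simp only [zero_mul, add_zero, Finset.mul_sum]
      refine Finset.sum_congr rfl fun j _ => ?_
      rw [if_pos (by omega)]
      ring
    have eR : ∑ j ∈ range (m+2), phc μ 0 m j * z ^ j
        = ∑ j ∈ range (m+1), phc μ 0 m j * z ^ j := by
      rw [Finset.sum_range_succ, phc_zero μ 0 m (m+1) (le_refl _), zero_mul, add_zero]
    rw [← eL, ← eR, Finset.mul_sum]
    rw [← Finset.sum_add_distrib]
    refine Finset.sum_congr rfl fun j hj => ?_
    have := hwzero j (mem_range.mp hj)
    simp only [hw] at this
    have haj : aa j = phc μ 0 (m+1) j + Q * phc μ 0 m j := by linarith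
    rw [haj]; ring
  · -- part (b)
    intro i hiN z
    rcases Nat.eq_zero_or_pos i with h | h
    · subst h
      simp [opolyS, Ecd]
    obtain ⟨n, rfl⟩ : ∃ n, i = n + 1 := ⟨i - 1, by omega⟩
    have hiN' : n + 1 ≤ N := by omega
    simp only [Nat.add_sub_cancel]
    have hτ0n1 : tauS μ 0 (n+1) ≠ 0 := h0' (n+1) hiN'
    have hτ1n : tauS μ 1 n ≠ 0 := h1' n (by omega)
    have hτ1n1 : tauS μ 1 (n+1) ≠ 0 := h1' (n+1) hiN'
    set E := Ecd μ (n+1) with hE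
    have hEval : E = tauS μ 0 (n+2) * tauS μ 1 n / (tauS μ 0 (n+1) * tauS μ 1 (n+1)) := by
      rw [hE, Ecd, if_neg (by omega), Nat.add_sub_cancel]
    set w : ℕ → ℝ := fun j => phc μ 0 (n+1) j - phc μ 1 (n+1) j - E * phc μ 1 n j with hw
    have hwzero : ∀ j, j < n + 2 → w j = 0 := by
      apply nondeg μ 1 (n+1) hτ1n1 w
      · intro k hk
        have T1 : ∑ j ∈ range (n+2), μ (k + j + 1) * phc μ 0 (n+1) j
            = ∑ j ∈ range (n+2), μ ((k+1) + j + 0) * phc μ 0 (n+1) j := by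
          refine Finset.sum_congr rfl fun j _ => ?_
          rw [show k+j+1 = (k+1)+j+0 from by omega]
        have T3 : ∑ j ∈ range (n+2), μ (k + j + 1) * phc μ 1 n j
            = ∑ j ∈ range (n+1), μ (k + j + 1) * phc μ 1 n j := by
          rw [Finset.sum_range_succ, phc_zero μ 1 n (n+1) (le_refl _), mul_zero, add_zero]
        have expand : ∑ j ∈ range (n+2), μ (k + j + 1) * w j
            = (∑ j ∈ range (n+2), μ (k + j + 1) * phc μ 0 (n+1) j)
              - (∑ j ∈ range (n+2), μ (k + j + 1) * phc μ 1 (n+1) j)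
              - E * (∑ j ∈ range (n+2), μ (k + j + 1) * phc μ 1 n j) := by
          rw [Finset.mul_sum, ← Finset.sum_sub_distrib, ← Finset.sum_sub_distrib]
          refine Finset.sum_congr rfl fun j _ => ?_
          simp only [hw]; ring
        rw [expand, T1, T3, moments_phc μ 0 (n+1) (k+1) (by omega),
          moments_phc μ 1 (n+1) k (by omega), moments_phc μ 1 n k (by omega),
          if_pos (by omega : k < n + 1)]
        by_cases hkn : k < n
        · rw [if_pos (by omega : k + 1 < n + 1), if_pos hkn]; ring
        · have : k = n := by omega
          rw [if_neg (by omega : ¬ (k + 1 < n + 1)), if_neg hkn, hEval]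
          field_simp
          ring
      · simp only [hw]
        rw [phc_top μ 0 (n+1) hτ0n1, phc_top μ 1 (n+1) hτ1n1,
          phc_zero μ 1 n (n+1) (le_refl _)]
        ring
    rw [opoly_phc, opoly_phc, opoly_phc]
    have eR : ∑ j ∈ range (n+2), phc μ 1 n j * z ^ j
        = ∑ j ∈ range (n+1), phc μ 1 n j * z ^ j := by
      rw [Finset.sum_range_succ, phc_zero μ 1 n (n+1) (le_refl _), zero_mul, add_zero]
    rw [← eR, Finset.mul_sum, ← Finset.sum_add_distrib]
    refine Finset.sum_congr rfl fun j hj => ?_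
    have := hwzero j (mem_range.mp hj)
    simp only [hw] at this
    have haj : phc μ 0 (n+1) j = phc μ 1 (n+1) j + E * phc μ 1 n j := by linarith
    rw [haj]; ring
end

section
/- Let N ≥ 1, let δ be a real number, and let (μ_i)_{i≥0} be a real sequence. Define ν_i := μ_{i+1} + δ μ_i for i ≥ 0. Let τ_0 := 1, τ_i := det(μ_{j+k})_{j,k=0}^{i−1} and σ_0 := 1, σ_i := det(ν_{j+k})_{j,k=0}^{i−1}, and assume τ_i ≠ 0 and σ_i ≠ 0 for i = 1,…,N. Let φ_i(z) and ψ_i(z) be the monic orthogonal-polynomial determinants built from (μ_i) and (ν_i) respectively: φ_0(z) := 1 and φ_i(z) := (1/τ_i) det of the (i+1)×(i+1) matrix whose first i rows are (μ_k, μ_{k+1}, …, μ_{k+i}) for k = 0,…,i−1 and last row (1, z, …, z^i), and similarly for ψ_i(z) with ν in place of μ. Set Q̄_i := τ_{i−1} σ_i / (τ_i σ_{i−1}) for 1 ≤ i ≤ N and Ē_i := τ_{i+1} σ_{i−1} / (τ_i σ_i) for 0 ≤ i ≤ N−1 (so Ē_0 = 0 since τ_{−1} := 0). Then, as identities of polynomials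 in z: (a) (z + δ)·ψ_{i−1}(z) = φ_i(z) + Q̄_i φ_{i−1}(z) for i = 1,…,N; (b) φ_i(z) = ψ_i(z) + Ē_i ψ_{i−1}(z) for i = 0,…,N−1. -/
/-!
The `φ_i` are the monic orthogonal polynomials of the moment functional `L p = ∑ pₘ μₘ`, and
`ν` is the moment sequence of `p ↦ L ((X + δ) p)`. When `τ_i ≠ 0`, a polynomial of degree `< i`
with `L (X^k p) = 0` for all `k < i` vanishes, its coefficient vector being killed by the Hankel
matrix. Each identity, moved to one side, has degree `< i` because the monic leading terms cancel,
and is orthogonal to `X^k` for `k < i - 1` by orthogonality of the three polynomials involved;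
the constants `Q̄_i`, `Ē_i` are exactly what makes the last pairing, at `k = i - 1`, vanish too.
-/

open Finset

/-- Hankel determinant τ_i of a moment sequence. -/
noncomputable def hank (μ : ℕ → ℝ) (i : ℕ) : ℝ :=
  Matrix.det (Matrix.of fun j k : Fin i => μ (j.1 + k.1))

/-- The monic orthogonal polynomial determinant built from a moment sequence. -/
noncomputable def opoly (μ : ℕ → ℝ) (i : ℕ) (z : ℝ) : ℝ :=
  if i = 0 then 1 else
    (1 / hank μ i) *
      Matrix.det (Matrix.of fun k j : Fin (i + 1) =>
        if k.1 < i then μ (k.1 + j.1) else z ^ j.1)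

/-- The shifted moment sequence ν_i := μ_{i+1} + δ μ_i. -/
noncomputable def nuSeq (δ : ℝ) (μ : ℕ → ℝ) : ℕ → ℝ :=
  fun m => μ (m + 1) + δ * μ m

/-- Q̄_i := τ_{i−1} σ_i / (τ_i σ_{i−1}). -/
noncomputable def Qbar (δ : ℝ) (μ : ℕ → ℝ) (i : ℕ) : ℝ :=
  hank μ (i - 1) * hank (nuSeq δ μ) i / (hank μ i * hank (nuSeq δ μ) (i - 1))

/-- Ē_i := τ_{i+1} σ_{i−1} / (τ_i σ_i), with Ē_0 = 0. -/
noncomputable def Ebar (δ : ℝ) (μ : ℕ → ℝ) (i : ℕ) : ℝ :=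
  if i = 0 then 0 else
    hank μ (i + 1) * hank (nuSeq δ μ) (i - 1) / (hank μ i * hank (nuSeq δ μ) i)

open Polynomial

lemma Polynomial.Monic.degree_sub_lt_of_natDegree_eq {R : Type*} [Ring R] [Nontrivial R]
    {p q : R[X]} {n : ℕ} (hp : p.Monic) (hq : q.Monic) (hpn : p.natDegree = n)
    (hqn : q.natDegree = n) : (p - q).degree < n := by
  rw [← hpn, ← degree_eq_natDegree hp.ne_zero]
  exact degree_sub_lt_left (by rw [degree_eq_natDegree hp.ne_zero, degree_eq_natDegree hq.ne_zero,
    hpn, hqn]) hp.ne_zero (by rw [hp.leadingCoeff, hq.leadingCoeff])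

section MomentFunctional

variable {R : Type*} [CommSemiring R]

noncomputable def momentFunctional (μ : ℕ → R) : R[X] →ₗ[R] R :=
  lsum fun m => μ m • LinearMap.id

variable (μ : ℕ → R)

@[simp]
lemma momentFunctional_monomial (m : ℕ) (a : R) : momentFunctional μ (monomial m a) = μ m * a := by
  simp [momentFunctional, sum_monomial_index]

lemma momentFunctional_C_mul (a : R) (p : R[X]) :
    momentFunctional μ (C a * p) = a * momentFunctional μ p := by
  rw [← smul_eq_C_mul, map_smul, smul_eq_mul]

lemma momentFunctional_X_pow_mul (k : ℕ) (p : R[X]) :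
    momentFunctional μ (X ^ k * p) = momentFunctional (fun m => μ (k + m)) p := by
  induction p using Polynomial.induction_on' with
  | add p q hp hq => rw [mul_add, map_add, map_add, hp, hq]
  | monomial m a => rw [X_pow_mul_monomial, momentFunctional_monomial,
      momentFunctional_monomial, add_comm]

lemma momentFunctional_eq_sum_fin {n : ℕ} {p : R[X]} (hp : p.degree < n) :
    momentFunctional μ p = ∑ m : Fin n, μ m * p.coeff m := by
  rw [sum_fin _ (fun m => mul_zero (μ m)) hp]
  rfl

end MomentFunctional

lemma momentFunctional_nuSeq (δ : ℝ) (μ : ℕ → ℝ) (p : ℝ[X]) :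
    momentFunctional (nuSeq δ μ) p = momentFunctional μ ((X + C δ) * p) := by
  induction p using Polynomial.induction_on' with
  | add p q hp hq => rw [map_add, hp, hq, mul_add, map_add]
  | monomial m a =>
    rw [add_mul, X_mul_monomial, C_mul_monomial, map_add, momentFunctional_monomial,
      momentFunctional_monomial, momentFunctional_monomial, nuSeq]
    ring

lemma hank_zero (μ : ℕ → ℝ) : hank μ 0 = 1 := Matrix.det_fin_zero

lemma hank_ne_zero_of_le {μ : ℕ → ℝ} {N : ℕ} (h : ∀ i, 1 ≤ i → i ≤ N → hank μ i ≠ 0) {i : ℕ}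
    (hi : i ≤ N) : hank μ i ≠ 0 := by
  rcases Nat.eq_zero_or_pos i with rfl | hi0
  · simp [hank_zero]
  · exact h i hi0 hi

lemma eq_zero_of_momentFunctional_X_pow_mul_eq_zero {μ : ℕ → ℝ} {i : ℕ} (hτ : hank μ i ≠ 0)
    {p : ℝ[X]} (hp : p.degree < i) (horth : ∀ k < i, momentFunctional μ (X ^ k * p) = 0) :
    p = 0 := by
  have hcoeff : (fun m : Fin i => p.coeff m) = 0 := by
    refine Matrix.eq_zero_of_mulVec_eq_zero hτ (funext fun k => ?_)
    rw [Pi.zero_apply, ← horth k k.isLt, momentFunctional_X_pow_mul,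
      momentFunctional_eq_sum_fin _ hp]
    rfl
  rw [← sum_monomial_eq p, ← sum_fin _ (fun m => monomial_zero_right m) hp]
  simp [funext_iff.1 hcoeff]

noncomputable def hankelCofactor (μ : ℕ → ℝ) (i : ℕ) (j : Fin (i + 1)) : ℝ :=
  (-1) ^ (i + j.1) *
    ((Matrix.of fun k l : Fin (i + 1) => μ (k.1 + l.1)).submatrix Fin.castSucc j.succAbove).det

lemma hankelCofactor_last (μ : ℕ → ℝ) (i : ℕ) : hankelCofactor μ i (Fin.last i) = hank μ i := by
  simp only [hankelCofactor, Fin.val_last, Fin.succAbove_last, ← two_mul, pow_mul, neg_one_sq,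
    one_pow, one_mul, hank]
  rfl

lemma det_hankel_lastRow (μ : ℕ → ℝ) (i : ℕ) (v : Fin (i + 1) → ℝ) :
    (Matrix.of fun k j : Fin (i + 1) => if k.1 < i then μ (k.1 + j.1) else v j).det
      = ∑ j, hankelCofactor μ i j * v j := by
  rw [Matrix.det_succ_row _ (Fin.last i)]
  refine Finset.sum_congr rfl fun j _ => ?_
  have hminor :
      (Matrix.of fun k j : Fin (i + 1) => if k.1 < i then μ (k.1 + j.1) else v j).submatrix
        (Fin.last i).succAbove j.succAbove =
      (Matrix.of fun k l : Fin (i + 1) => μ (k.1 + l.1)).submatrix Fin.castSucc j.succAbove := by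
    ext k l
    simp [Fin.succAbove_last]
  simp only [hminor, hankelCofactor, Fin.val_last, Matrix.of_apply, lt_irrefl, if_false]
  ring

/-- Cofactor expansion of the determinant in `opoly` along its last row `(1, z, …, z^i)`. -/
noncomputable def orthoPoly (μ : ℕ → ℝ) (i : ℕ) : ℝ[X] :=
  C (hank μ i)⁻¹ * ∑ j : Fin (i + 1), monomial j (hankelCofactor μ i j)

lemma eval_orthoPoly (μ : ℕ → ℝ) (i : ℕ) (z : ℝ) : (orthoPoly μ i).eval z = opoly μ i z := by
  have h : (orthoPoly μ i).eval z = (hank μ i)⁻¹ *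
      (Matrix.of fun k j : Fin (i + 1) => if k.1 < i then μ (k.1 + j.1) else z ^ j.1).det := by
    simp [orthoPoly, det_hankel_lastRow, eval_finsetSum]
  rw [h, opoly, one_div]
  split_ifs with hi
  · subst hi
    simp [hank_zero]
  · rfl

lemma natDegree_orthoPoly_le (μ : ℕ → ℝ) (i : ℕ) : (orthoPoly μ i).natDegree ≤ i :=
  (natDegree_C_mul_le _ _).trans <| natDegree_sum_le_of_forall_le _ _ fun j _ =>
    (natDegree_monomial_le _).trans (Nat.lt_succ_iff.1 j.isLt)

lemma degree_orthoPoly_lt (μ : ℕ → ℝ) (i : ℕ) : (orthoPoly μ i).degree < ↑(i + 1) :=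
  degree_le_natDegree.trans_lt (by exact_mod_cast Nat.lt_succ_of_le (natDegree_orthoPoly_le μ i))

lemma coeff_orthoPoly_self {μ : ℕ → ℝ} {i : ℕ} (hτ : hank μ i ≠ 0) :
    (orthoPoly μ i).coeff i = 1 := by
  rw [orthoPoly, coeff_C_mul, finsetSum_coeff, Finset.sum_eq_single (Fin.last i)]
  · rw [Fin.val_last, coeff_monomial_same, hankelCofactor_last, inv_mul_cancel₀ hτ]
  · intro j _ hj
    exact coeff_monomial_of_ne _ (Fin.val_injective.ne hj).symm
  · simp

lemma monic_orthoPoly {μ : ℕ → ℝ} {i : ℕ} (hτ : hank μ i ≠ 0) : (orthoPoly μ i).Monic :=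
  monic_of_natDegree_le_of_coeff_eq_one i (natDegree_orthoPoly_le μ i) (coeff_orthoPoly_self hτ)

lemma natDegree_orthoPoly {μ : ℕ → ℝ} {i : ℕ} (hτ : hank μ i ≠ 0) : (orthoPoly μ i).natDegree = i :=
  natDegree_eq_of_le_of_coeff_ne_zero (natDegree_orthoPoly_le μ i)
    (by simp [coeff_orthoPoly_self hτ])

lemma momentFunctional_X_pow_mul_orthoPoly (μ : ℕ → ℝ) (i k : ℕ) :
    momentFunctional μ (X ^ k * orthoPoly μ i) = (hank μ i)⁻¹ *
      (Matrix.of fun l j : Fin (i + 1) => if l.1 < i then μ (l.1 + j.1) else μ (k + j.1)).det := by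
  simp [orthoPoly, mul_left_comm _ (C _), momentFunctional_C_mul, momentFunctional_X_pow_mul,
    det_hankel_lastRow, mul_comm]

lemma momentFunctional_X_pow_mul_orthoPoly_of_lt (μ : ℕ → ℝ) {i k : ℕ} (hk : k < i) :
    momentFunctional μ (X ^ k * orthoPoly μ i) = 0 := by
  rw [momentFunctional_X_pow_mul_orthoPoly, Matrix.det_zero_of_row_eq (i := ⟨k, by omega⟩)
    (j := Fin.last i) (Fin.ne_of_val_ne (by simp only [Fin.val_last]; omega)) (by ext; simp [hk]),
    mul_zero]

lemma momentFunctional_X_pow_mul_orthoPoly_self (μ : ℕ → ℝ) (i : ℕ) :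
    momentFunctional μ (X ^ i * orthoPoly μ i) = hank μ (i + 1) / hank μ i := by
  rw [momentFunctional_X_pow_mul_orthoPoly, inv_mul_eq_div, hank]
  congr 2
  ext l j
  by_cases hl : l.1 < i
  · simp [hl]
  · simp [show l.1 = i by omega]

lemma X_add_C_mul_orthoPoly_nuSeq {δ : ℝ} {μ : ℕ → ℝ} {n : ℕ} (hτ : hank μ (n + 1) ≠ 0)
    (hτ' : hank μ n ≠ 0) (hσ : hank (nuSeq δ μ) n ≠ 0) :
    (X + C δ) * orthoPoly (nuSeq δ μ) n
      = orthoPoly μ (n + 1) + C (Qbar δ μ (n + 1)) * orthoPoly μ n := by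
  rw [← sub_eq_zero, ← sub_sub]
  refine eq_zero_of_momentFunctional_X_pow_mul_eq_zero hτ ?_ fun k hk => ?_
  · refine (degree_sub_le _ _).trans_lt (max_lt ?_ ?_)
    · exact ((monic_X_add_C δ).mul (monic_orthoPoly hσ)).degree_sub_lt_of_natDegree_eq
        (monic_orthoPoly hτ) (by rw [(monic_X_add_C δ).natDegree_mul (monic_orthoPoly hσ),
          natDegree_X_add_C, natDegree_orthoPoly hσ, add_comm]) (natDegree_orthoPoly hτ)
    · rw [← smul_eq_C_mul]
      exact (degree_smul_le _ _).trans_lt (degree_orthoPoly_lt μ n)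
  have hsplit : X ^ k * ((X + C δ) * orthoPoly (nuSeq δ μ) n - orthoPoly μ (n + 1)
      - C (Qbar δ μ (n + 1)) * orthoPoly μ n) = (X + C δ) * (X ^ k * orthoPoly (nuSeq δ μ) n)
        - X ^ k * orthoPoly μ (n + 1) - C (Qbar δ μ (n + 1)) * (X ^ k * orthoPoly μ n) := by
    ring
  rw [hsplit, map_sub, map_sub, ← momentFunctional_nuSeq, momentFunctional_C_mul,
    momentFunctional_X_pow_mul_orthoPoly_of_lt μ hk]
  rcases (Nat.lt_succ_iff.1 hk).lt_or_eq with hk | rfl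
  · rw [momentFunctional_X_pow_mul_orthoPoly_of_lt _ hk,
      momentFunctional_X_pow_mul_orthoPoly_of_lt _ hk]
    ring
  · rw [momentFunctional_X_pow_mul_orthoPoly_self, momentFunctional_X_pow_mul_orthoPoly_self,
      Qbar, Nat.add_sub_cancel]
    field_simp
    ring

lemma orthoPoly_eq_orthoPoly_nuSeq_add {δ : ℝ} {μ : ℕ → ℝ} {n : ℕ} (hτ : hank μ (n + 1) ≠ 0)
    (hσ : hank (nuSeq δ μ) (n + 1) ≠ 0) (hσ' : hank (nuSeq δ μ) n ≠ 0) :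
    orthoPoly μ (n + 1)
      = orthoPoly (nuSeq δ μ) (n + 1) + C (Ebar δ μ (n + 1)) * orthoPoly (nuSeq δ μ) n := by
  rw [← sub_eq_zero, ← sub_sub]
  refine eq_zero_of_momentFunctional_X_pow_mul_eq_zero hσ ?_ fun k hk => ?_
  · refine (degree_sub_le _ _).trans_lt (max_lt ?_ ?_)
    · exact (monic_orthoPoly hτ).degree_sub_lt_of_natDegree_eq (monic_orthoPoly hσ)
        (natDegree_orthoPoly hτ) (natDegree_orthoPoly hσ)
    · rw [← smul_eq_C_mul]
      exact (degree_smul_le _ _).trans_lt (degree_orthoPoly_lt _ n)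
  have hshift : (X + C δ) * (X ^ k * orthoPoly μ (n + 1))
      = X ^ (k + 1) * orthoPoly μ (n + 1) + C δ * (X ^ k * orthoPoly μ (n + 1)) := by
    ring
  rw [mul_sub, mul_sub, mul_left_comm _ (C _), map_sub, map_sub, momentFunctional_C_mul,
    momentFunctional_nuSeq, hshift, map_add, momentFunctional_C_mul,
    momentFunctional_X_pow_mul_orthoPoly_of_lt μ hk,
    momentFunctional_X_pow_mul_orthoPoly_of_lt _ hk]
  rcases (Nat.lt_succ_iff.1 hk).lt_or_eq with hk | rfl
  · rw [momentFunctional_X_pow_mul_orthoPoly_of_lt μ (Nat.succ_lt_succ hk),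
      momentFunctional_X_pow_mul_orthoPoly_of_lt _ hk]
    ring
  · rw [momentFunctional_X_pow_mul_orthoPoly_self, momentFunctional_X_pow_mul_orthoPoly_self,
      Ebar, if_neg (Nat.succ_ne_zero _), Nat.add_sub_cancel]
    field_simp
    ring

theorem stmt4_general (N : ℕ) (δ : ℝ) (μ : ℕ → ℝ)
    (hτ : ∀ i, 1 ≤ i → i ≤ N → hank μ i ≠ 0)
    (hσ : ∀ i, 1 ≤ i → i ≤ N → hank (nuSeq δ μ) i ≠ 0) :
    (∀ i, 1 ≤ i → i ≤ N → ∀ z : ℝ,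
      (z + δ) * opoly (nuSeq δ μ) (i - 1) z
        = opoly μ i z + Qbar δ μ i * opoly μ (i - 1) z) ∧
    (∀ i, i ≤ N - 1 → ∀ z : ℝ,
      opoly μ i z = opoly (nuSeq δ μ) i z + Ebar δ μ i * opoly (nuSeq δ μ) (i - 1) z) := by
  refine ⟨fun i hi hiN z => ?_, fun i hiN z => ?_⟩
  · obtain ⟨n, rfl⟩ := Nat.exists_eq_add_of_le' hi
    have hrec := X_add_C_mul_orthoPoly_nuSeq (δ := δ) (hτ _ hi hiN)
      (hank_ne_zero_of_le hτ (by omega)) (hank_ne_zero_of_le hσ (by omega))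
    simpa [eval_orthoPoly] using congrArg (eval z) hrec
  · rcases i.eq_zero_or_pos with rfl | hi
    · simp [opoly, Ebar]
    obtain ⟨n, rfl⟩ := Nat.exists_eq_add_of_le' hi
    have hrec := orthoPoly_eq_orthoPoly_nuSeq_add (hτ _ hi (by omega)) (hσ _ hi (by omega))
      (hank_ne_zero_of_le hσ (by omega))
    simpa [eval_orthoPoly] using congrArg (eval z) hrec

theorem stmt4 (N : ℕ) (hN : 1 ≤ N) (δ : ℝ) (μ : ℕ → ℝ)
    (hτ : ∀ i, 1 ≤ i → i ≤ N → hank μ i ≠ 0)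
    (hσ : ∀ i, 1 ≤ i → i ≤ N → hank (nuSeq δ μ) i ≠ 0) :
    (∀ i, 1 ≤ i → i ≤ N → ∀ z : ℝ,
      (z + δ) * opoly (nuSeq δ μ) (i - 1) z
        = opoly μ i z + Qbar δ μ i * opoly μ (i - 1) z) ∧
    (∀ i, i ≤ N - 1 → ∀ z : ℝ,
      opoly μ i z = opoly (nuSeq δ μ) i z + Ebar δ μ i * opoly (nuSeq δ μ) (i - 1) z) :=
  stmt4_general N δ μ hτ hσ
end

section
/- Let N ≥ 1, let λ_1,…,λ_N be nonzero reals, c_1,…,c_N reals, and (δ^{(ℓ)})_{ℓ≥0} a real sequence. Define moments μ_i^{(s,n)} := Σ_{j=1}^N c_j λ_j^{i+s} Π_{ℓ=0}^{n−1} (λ_j + δ^{(ℓ)}) for i ∈ ℕ, s ∈ ℤ, n ∈ ℕ, Hankel determinants τ_0^{(s,n)} := 1, τ_i^{(s,n)} := det(μ_{j+k}^{(s,n)})_{j,k=0}^{i−1}, and set Q_i^{(s,n)} := τ_{i−1}^{(s,n)} τ_i^{(s+1,n)} / (τ_i^{(s,n)} τ_{i−1}^{(s+1,n)}), E_i^{(s,n)}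 := τ_{i+1}^{(s,n)} τ_{i−1}^{(s+1,n)} / (τ_i^{(s,n)} τ_i^{(s+1,n)}) for 1 ≤ i ≤ N−1 with E_0^{(s,n)} := 0 and E_N^{(s,n)} := 0, and Q̄_i^{(s,n)} := τ_{i−1}^{(s,n)} τ_i^{(s,n+1)} / (τ_i^{(s,n)} τ_{i−1}^{(s,n+1)}), Ē_i^{(s,n)} := τ_{i+1}^{(s,n)} τ_{i−1}^{(s,n+1)} / (τ_i^{(s,n)} τ_i^{(s,n+1)}) for 1 ≤ i ≤ N−1 with Ē_0^{(s,n)} := 0 and Ē_N^{(s,n)} := 0. Fix s ∈ ℤ and n ∈ ℕ, and assume τ_i^{(s,n)}, τ_i^{(s−1,n)}, τ_i^{(s+1,n)}, τ_i^{(s,n+1)}, τ_i^{(s−1,n+1)} are all nonzero for i = 1,…,N. Then: Q_i^{(s−1,n+1)} + E_i^{(s−1,n+1)} = Q̄_i^{(s,n)} + Ē_i^{(s,n)} − δ^{(n)} for i = 1,…,N, and Q_{i+1}^{(s−1,n+1)} E_i^{(s−1,n+1)} = Q̄_{i+1}^{(s,n)} Ē_i^{(s,n)} for i = 1,…,N−1.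 -/
/-!
Write `b m = μ_m^{(s-1,n)}` and `c m = μ_m^{(s-1,n+1)}`. Then `c m = b (m+1) + δ^{(n)} b m`, and
the four families of `τ`'s in the statement are the Hankel determinants of `b`, `c` and of their
shifts. Column operations turn the Hankel determinants of `b` and `c` into Hankel determinants
bordered by a column of `b`'s or a row of powers of `-δ^{(n)}`, and the Desnanot–Jacobi identity
applied to these bordered matrices yields two bilinear relations between the Hankel determinants
of `b`, `c` and their shifts. The first identity is an algebraic consequence of them; at `i = N`,
where `E_N = Ē_N = 0`, one uses instead that the moments are sums of `N` exponentials in the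
index, so by the Vandermonde factorisation a shift multiplies the `N × N` Hankel determinant by
`∏ λ_j`. For the second identity, both products equal `τ_{i-1} τ_{i+1} / τ_i²` with
`τ = τ^{(s,n+1)}`.
-/

open Finset

/-- Moments μ_i^{(s,n)} := Σ_{j=1}^N c_j λ_j^{i+s} Π_{ℓ=0}^{n−1}(λ_j + δ^{(ℓ)}). -/
noncomputable def mom {N : ℕ} (lam c : Fin N → ℝ) (δ : ℕ → ℝ) (i : ℕ) (s : ℤ) (n : ℕ) : ℝ :=
  ∑ j : Fin N, c j * lam j ^ ((i : ℤ) + s) * ∏ l ∈ Finset.range n, (lam j + δ l)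

/-- Hankel determinants τ_i^{(s,n)}. -/
noncomputable def tauH {N : ℕ} (lam c : Fin N → ℝ) (δ : ℕ → ℝ) (i : ℕ) (s : ℤ) (n : ℕ) : ℝ :=
  Matrix.det (Matrix.of fun j k : Fin i => mom lam c δ (j.1 + k.1) s n)

/-- Q_i^{(s,n)}. -/
noncomputable def Qsn {N : ℕ} (lam c : Fin N → ℝ) (δ : ℕ → ℝ) (i : ℕ) (s : ℤ) (n : ℕ) : ℝ :=
  tauH lam c δ (i - 1) s n * tauH lam c δ i (s + 1) n /
    (tauH lam c δ i s n * tauH lam c δ (i - 1) (s + 1) n)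

/-- E_i^{(s,n)}, with the conventions E_0^{(s,n)} = 0 and E_N^{(s,n)} = 0. -/
noncomputable def Esn {N : ℕ} (lam c : Fin N → ℝ) (δ : ℕ → ℝ) (i : ℕ) (s : ℤ) (n : ℕ) : ℝ :=
  if i = 0 ∨ i = N then 0 else
    tauH lam c δ (i + 1) s n * tauH lam c δ (i - 1) (s + 1) n /
      (tauH lam c δ i s n * tauH lam c δ i (s + 1) n)

/-- Q̄_i^{(s,n)}. -/
noncomputable def Qbsn {N : ℕ} (lam c : Fin N → ℝ) (δ : ℕ → ℝ) (i : ℕ) (s : ℤ) (n : ℕ) : ℝ :=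
  tauH lam c δ (i - 1) s n * tauH lam c δ i s (n + 1) /
    (tauH lam c δ i s n * tauH lam c δ (i - 1) s (n + 1))

/-- Ē_i^{(s,n)}, with the conventions Ē_0^{(s,n)} = 0 and Ē_N^{(s,n)} = 0. -/
noncomputable def Ebsn {N : ℕ} (lam c : Fin N → ℝ) (δ : ℕ → ℝ) (i : ℕ) (s : ℤ) (n : ℕ) : ℝ :=
  if i = 0 ∨ i = N then 0 else
    tauH lam c δ (i + 1) s n * tauH lam c δ (i - 1) s (n + 1) /
      (tauH lam c δ i s n * tauH lam c δ i s (n + 1))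

namespace Matrix

variable {R : Type*} [CommRing R] {n : Type*} [Fintype n] [DecidableEq n]

/-- Weinstein–Aronszajn: the matrix is `1 + P * Q` with `P * Q` of rank two, so its determinant
is that of the `2 × 2` matrix `1 + Q * P`. -/
theorem det_updateRow_updateRow_one {i j : n} (hij : i ≠ j) (u v : n → R) :
    (((1 : Matrix n n R).updateRow i u).updateRow j v).det = u i * v j - u j * v i := by
  let P : Matrix n (Fin 2) R := of fun k a => if k = ![i, j] a then 1 else 0
  let Q : Matrix (Fin 2) n R := of fun a k => ![u, v] a k - if k = ![i, j] a then 1 else 0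
  have hPQ : ((1 : Matrix n n R).updateRow i u).updateRow j v = 1 + P * Q := by
    ext r k
    have hrow : (1 + P * Q : Matrix n n R) r k = (1 : Matrix n n R) r k
        + (if r = i then u k - (1 : Matrix n n R) i k else 0)
        + (if r = j then v k - (1 : Matrix n n R) j k else 0) := by
      simp [P, Q, mul_apply, Fin.sum_univ_two, one_apply, eq_comm, add_assoc]
    rw [hrow]
    rcases eq_or_ne r j with rfl | hrj
    · simp [hij.symm]
    rcases eq_or_ne r i with rfl | hri
    · simp [hrj]
    · simp [hri, hrj, updateRow_ne]
  have hQP : 1 + Q * P = of fun a b => ![u, v] a (![i, j] b) := by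
    ext a b
    simp only [P, Q, add_apply, mul_apply, of_apply, mul_boole, Finset.sum_ite_eq',
      Finset.mem_univ, if_true]
    fin_cases a <;> fin_cases b <;> simp [hij, hij.symm]
  rw [hPQ, det_one_add_mul_comm, hQP, det_fin_two]
  simp

/-- Multiplying `A` on the left by the identity with rows `i`, `j` replaced by those of
`adjugate A` replaces rows `i`, `j` of `A` by `det A` times the corresponding unit vectors. -/
theorem adjugate_mul_adjugate_sub_mul_det (A : Matrix n n R) {i j : n} (hij : i ≠ j) :
    (adjugate A i i * adjugate A j j - adjugate A i j * adjugate A j i) * A.det =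
      A.det ^ 2 * ((A.updateRow i (Pi.single i 1)).updateRow j (Pi.single j 1)).det := by
  have hrow (k : n) : adjugate A k ᵥ* A = A.det • Pi.single k 1 := by
    ext l
    simp [vecMul, dotProduct, ← mul_apply, adjugate_mul, one_apply, Pi.single_apply, eq_comm]
  rw [← det_updateRow_updateRow_one hij, ← det_mul, updateRow_mul, updateRow_mul, one_mul,
    hrow, hrow, det_updateRow_smul, updateRow_comm _ hij, det_updateRow_smul,
    updateRow_comm _ hij.symm]
  ring

/-- Cancel `det` for the generic matrix over `ℤ[X_ij]`, then specialise. -/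
theorem adjugate_mul_adjugate_sub (A : Matrix n n R) {i j : n} (hij : i ≠ j) :
    adjugate A i i * adjugate A j j - adjugate A i j * adjugate A j i =
      A.det * ((A.updateRow i (Pi.single i 1)).updateRow j (Pi.single j 1)).det := by
  set X := mvPolynomialX n n ℤ
  have hX : adjugate X i i * adjugate X j j - adjugate X i j * adjugate X j i =
      X.det * ((X.updateRow i (Pi.single i 1)).updateRow j (Pi.single j 1)).det :=
    mul_right_cancel₀ (det_mvPolynomialX_ne_zero n ℤ)
      (by rw [adjugate_mul_adjugate_sub_mul_det X hij]; ring)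
  set f := MvPolynomial.aeval (R := ℤ) fun p : n × n => A p.1 p.2
  have hadj (a b : n) : f (adjugate X a b) = adjugate (f.mapMatrix X) a b :=
    congrFun (congrFun (AlgHom.map_adjugate f X) a) b
  have hsingle (k : n) : ⇑f ∘ Pi.single k 1 = Pi.single k 1 := by
    ext l
    by_cases h : l = k <;> simp [h]
  rw [← mvPolynomialX_mapMatrix_aeval ℤ A]
  simpa [hadj, hsingle, AlgHom.map_det, map_updateRow] using congrArg f hX

theorem desnanot_jacobi {m : ℕ} (A : Matrix (Fin (m + 2)) (Fin (m + 2)) R) :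
    A.det * (A.submatrix (Fin.castSucc ∘ Fin.succ) (Fin.castSucc ∘ Fin.succ)).det =
      (A.submatrix Fin.succ Fin.succ).det * (A.submatrix Fin.castSucc Fin.castSucc).det -
        (A.submatrix Fin.succ Fin.castSucc).det * (A.submatrix Fin.castSucc Fin.succ).det := by
  have hD : (A.updateRow 0 (Pi.single 0 1)).submatrix Fin.castSucc Fin.castSucc =
      (A.submatrix Fin.castSucc Fin.castSucc).updateRow 0 (Pi.single 0 1) := by
    ext a b
    simp [updateRow_apply, Pi.single_apply]
  have hDdet : ((A.updateRow 0 (Pi.single 0 1)).updateRow (Fin.last _)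
      (Pi.single (Fin.last _) 1)).det =
        (A.submatrix (Fin.castSucc ∘ Fin.succ) (Fin.castSucc ∘ Fin.succ)).det := by
    rw [← adjugate_apply, adjugate_fin_succ_eq_det_submatrix, Fin.succAbove_last, hD,
      ← adjugate_apply, adjugate_fin_succ_eq_det_submatrix, submatrix_submatrix]
    simp
  have h := adjugate_mul_adjugate_sub A (Fin.last_pos (n := m)).ne
  rw [hDdet] at h
  simp only [adjugate_fin_succ_eq_det_submatrix, Fin.succAbove_zero, Fin.succAbove_last,
    Fin.val_zero, Fin.val_last, add_zero, zero_add, pow_zero, one_mul,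
    Even.neg_one_pow ⟨m + 1, rfl⟩] at h
  have hsign : ((-1 : R) ^ (m + 1)) ^ 2 = 1 := by
    rw [← pow_mul, Even.neg_one_pow ⟨m + 1, by ring⟩]
  linear_combination -h - (A.submatrix Fin.castSucc Fin.succ).det *
    (A.submatrix Fin.succ Fin.castSucc).det * hsign

end Matrix

open Matrix

section Hankel

variable {R : Type*} [CommRing R]

noncomputable def hankelDet (u : ℕ → R) (i : ℕ) : R :=
  (of fun j k : Fin i => u (j + k)).det

@[simp] lemma hankelDet_zero (u : ℕ → R) : hankelDet u 0 = 1 :=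
  det_fin_zero

lemma hankelDet_ne_zero_of_forall [Nontrivial R] {u : ℕ → R} {N : ℕ}
    (h : ∀ i, 1 ≤ i → i ≤ N → hankelDet u i ≠ 0) {i : ℕ} (hi : i ≤ N) :
    hankelDet u i ≠ 0 := by
  rcases i with _ | i
  · simp
  · exact h _ (Nat.succ_pos i) hi

lemma hankelDet_sum_mul_pow {N : ℕ} (w x : Fin N → R) :
    hankelDet (fun m => ∑ k, w k * x k ^ m) N = (∏ k, w k) * (vandermonde x).det ^ 2 := by
  have h : (of fun i j : Fin N => ∑ k, w k * x k ^ (i + j : ℕ)) =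
      (vandermonde x)ᵀ * diagonal w * vandermonde x := by
    ext i j
    rw [mul_apply]
    simp only [of_apply, mul_diagonal, transpose_apply, vandermonde_apply, pow_add]
    exact Finset.sum_congr rfl fun k _ => by ring
  rw [hankelDet, h, det_mul, det_mul, det_transpose, det_diagonal]
  ring

lemma hankelDet_sum_mul_pow_succ {N : ℕ} (w x : Fin N → R) :
    hankelDet (fun m => ∑ k, w k * x k ^ (m + 1)) N =
      (∏ k, x k) * hankelDet (fun m => ∑ k, w k * x k ^ m) N := by
  simp only [pow_succ, ← mul_assoc, mul_right_comm _ (x _ ^ _)]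
  rw [hankelDet_sum_mul_pow, hankelDet_sum_mul_pow, Finset.prod_mul_distrib]
  ring

variable {u v : ℕ → R} {δ : R}

lemma hankelDet_eq_det_border_col (huv : ∀ m, v m = u (m + 1) + δ * u m) (q : ℕ) :
    hankelDet u (q + 1) =
      (of fun j k : Fin (q + 1) => if (k : ℕ) = 0 then u j else v (j + k - 1)).det := by
  refine det_eq_of_forall_col_eq_smul_add_pred (fun _ => -δ) (fun j => by simp) fun j k => ?_
  simp [huv, add_assoc]

lemma hankelDet_eq_det_border_row (huv : ∀ m, v m = u (m + 1) + δ * u m) (p : ℕ) :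
    hankelDet v p = (of fun j k : Fin (p + 1) =>
      if (j : ℕ) = 0 then (-δ) ^ (k : ℕ) else u (j - 1 + k)).det := by
  rw [det_eq_of_forall_col_eq_smul_add_pred (B := of fun j k : Fin (p + 1) =>
      if (j : ℕ) = 0 then (if (k : ℕ) = 0 then 1 else 0) else if (k : ℕ) = 0 then u (j - 1)
        else v (j - 1 + k - 1)) (fun _ => -δ) (fun j => by simp) fun j k => ?_]
  · rw [det_succ_row_zero, Fin.sum_univ_succ, Finset.sum_eq_zero (fun k _ => by simp)]
    simp only [hankelDet, Fin.val_zero, pow_zero, of_apply, if_true, one_mul, add_zero,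
      Fin.succAbove_zero]
    refine congrArg det (ext fun j k => ?_)
    simp
  · simp only [of_apply, Fin.val_succ, Fin.val_castSucc, Nat.add_one_ne_zero, if_false]
    split_ifs <;> simp [huv, pow_succ, add_assoc]
    ring

/-- Desnanot–Jacobi for the column-bordered matrix, whose minors are again (bordered) Hankel
matrices. -/
lemma hankelDet_add_two_mul_hankelDet_shift (huv : ∀ m, v m = u (m + 1) + δ * u m) (q : ℕ) :
    hankelDet u (q + 2) * hankelDet (fun m => v (m + 1)) q =
      hankelDet (fun m => v (m + 1)) (q + 1) * hankelDet u (q + 1) -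
        hankelDet (fun m => u (m + 1)) (q + 1) * hankelDet v (q + 1) := by
  have h := desnanot_jacobi
    (of fun j k : Fin (q + 2) => if (k : ℕ) = 0 then u j else v (j + k - 1))
  rw [← hankelDet_eq_det_border_col huv] at h
  convert h using 3 <;>
    (try rw [hankelDet_eq_det_border_col huv]) <;>
    (try rw [hankelDet_eq_det_border_col (fun m => huv (m + 1))]) <;>
    refine congrArg det (ext fun j k => ?_) <;>
    simp only [submatrix_apply, of_apply, Function.comp_apply, Fin.val_succ, Fin.val_castSucc] <;>
    split_ifs <;> first | rfl | contradiction | omega | (congr 1; omega)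

/-- Desnanot–Jacobi for the row-bordered matrix; its minor without the last row and the first
column is the row-bordered matrix of the shifted sequences with its first row scaled by `-δ`. -/
lemma hankelDet_succ_mul_hankelDet_shift (huv : ∀ m, v m = u (m + 1) + δ * u m) (p : ℕ) :
    hankelDet v (p + 1) * hankelDet (fun m => u (m + 1)) p =
      hankelDet (fun m => u (m + 1)) (p + 1) * hankelDet v p +
        δ * hankelDet u (p + 1) * hankelDet (fun m => v (m + 1)) p := by
  set A := of fun j k : Fin (p + 2) => if (j : ℕ) = 0 then (-δ) ^ (k : ℕ) else u (j - 1 + k)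
  set M := of fun j k : Fin (p + 1) =>
    if (j : ℕ) = 0 then (-δ) ^ (k : ℕ) else u (j - 1 + k + 1)
  have hA : A.submatrix Fin.castSucc Fin.succ = M.updateRow 0 ((-δ) • M 0) := by
    ext j k
    simp only [A, M, submatrix_apply, updateRow_apply, of_apply, Pi.smul_apply, smul_eq_mul,
      Fin.val_succ, Fin.val_castSucc, Fin.ext_iff, Fin.val_zero]
    split_ifs <;> ring_nf
  have hM : M.det = hankelDet (fun m => v (m + 1)) p :=
    (hankelDet_eq_det_border_row (u := fun m => u (m + 1)) (fun m => huv (m + 1)) p).symm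
  have h := desnanot_jacobi A
  rw [hA, det_updateRow_smul, updateRow_eq_self, hM, ← hankelDet_eq_det_border_row huv] at h
  obtain ⟨e1, e2, e3, e4⟩ :
      (A.submatrix (Fin.castSucc ∘ Fin.succ) (Fin.castSucc ∘ Fin.succ)).det =
        hankelDet (fun m => u (m + 1)) p ∧
      (A.submatrix Fin.succ Fin.succ).det = hankelDet (fun m => u (m + 1)) (p + 1) ∧
      (A.submatrix Fin.castSucc Fin.castSucc).det = hankelDet v p ∧
      (A.submatrix Fin.succ Fin.castSucc).det = hankelDet u (p + 1) := by
    refine ⟨?_, ?_, ?_, ?_⟩ <;>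
      (try rw [hankelDet_eq_det_border_row huv]) <;>
      refine congrArg det (ext fun j k => ?_) <;>
      simp only [A, submatrix_apply, of_apply, Function.comp_apply, Fin.val_succ,
        Fin.val_castSucc] <;>
      split_ifs <;> first | rfl | contradiction
  rw [e1, e2, e3, e4] at h
  linear_combination h

end Hankel

section HankelQE

variable {F : Type*} [Field F]

/-- For the moment sequences `u`, `v` of `(s, n)` and `(s + 1, n)`, `hankelQ u v i` and
`hankelE u v i` are `Q_i^{(s,n)}` and `E_i^{(s,n)}`; for those of `(s, n)` and `(s, n + 1)` they
are `Q̄_i^{(s,n)}` and `Ē_i^{(s,n)}`. -/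
noncomputable def hankelQ (u v : ℕ → F) (i : ℕ) : F :=
  hankelDet u (i - 1) * hankelDet v i / (hankelDet u i * hankelDet v (i - 1))

noncomputable def hankelE (u v : ℕ → F) (i : ℕ) : F :=
  hankelDet u (i + 1) * hankelDet v (i - 1) / (hankelDet u i * hankelDet v i)

lemma hankelQ_succ_mul_hankelE (u v : ℕ → F) {i : ℕ} (hu : hankelDet u i ≠ 0)
    (hu' : hankelDet u (i + 1) ≠ 0) :
    hankelQ u v (i + 1) * hankelE u v i =
      hankelDet v (i - 1) * hankelDet v (i + 1) / hankelDet v i ^ 2 := by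
  simp only [hankelQ, hankelE, Nat.add_sub_cancel]
  field_simp

variable {u v : ℕ → F} {δ : F}

lemma hankelQ_add_hankelE (huv : ∀ m, v m = u (m + 1) + δ * u m) {m : ℕ}
    (hv : hankelDet v (m + 1) ≠ 0) (hSv : hankelDet (fun k => v (k + 1)) m ≠ 0)
    (hSv' : hankelDet (fun k => v (k + 1)) (m + 1) ≠ 0)
    (hSu : hankelDet (fun k => u (k + 1)) (m + 1) ≠ 0) :
    hankelQ v (fun k => v (k + 1)) (m + 1) + hankelE v (fun k => v (k + 1)) (m + 1) =
      hankelQ (fun k => u (k + 1)) (fun k => v (k + 1)) (m + 1) +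
        hankelE (fun k => u (k + 1)) (fun k => v (k + 1)) (m + 1) - δ := by
  have hrow := hankelDet_succ_mul_hankelDet_shift huv m
  have hrow' := hankelDet_succ_mul_hankelDet_shift huv (m + 1)
  have hcol := hankelDet_add_two_mul_hankelDet_shift huv m
  simp only [hankelQ, hankelE, Nat.add_sub_cancel]
  field_simp
  linear_combination hankelDet (fun k => v (k + 1)) m ^ 2 * hrow' -
    hankelDet (fun k => v (k + 1)) (m + 1) ^ 2 * hrow +
    δ * hankelDet (fun k => v (k + 1)) (m + 1) * hankelDet (fun k => v (k + 1)) m * hcol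

lemma hankelQ_eq_hankelQ_sub_of_shift_eq_mul (huv : ∀ m, v m = u (m + 1) + δ * u m) {m : ℕ}
    {L : F} (hu : hankelDet (fun k => u (k + 1)) (m + 1) = L * hankelDet u (m + 1))
    (hv : hankelDet (fun k => v (k + 1)) (m + 1) = L * hankelDet v (m + 1))
    (hSu : hankelDet (fun k => u (k + 1)) (m + 1) ≠ 0) (hv0 : hankelDet v (m + 1) ≠ 0)
    (hSv : hankelDet (fun k => v (k + 1)) m ≠ 0) :
    hankelQ v (fun k => v (k + 1)) (m + 1) =
      hankelQ (fun k => u (k + 1)) (fun k => v (k + 1)) (m + 1) - δ := by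
  have hrow := hankelDet_succ_mul_hankelDet_shift huv m
  rw [hu] at hSu hrow
  have hL : L ≠ 0 := left_ne_zero_of_mul hSu
  have hu0 : hankelDet u (m + 1) ≠ 0 := right_ne_zero_of_mul hSu
  simp only [hankelQ, Nat.add_sub_cancel, hu, hv]
  field_simp
  linear_combination -hrow

end HankelQE

section Moments

variable {N : ℕ} (lam c : Fin N → ℝ) (δ : ℕ → ℝ)

lemma mom_succ_index (i : ℕ) (s : ℤ) (n : ℕ) :
    mom lam c δ (i + 1) s n = mom lam c δ i (s + 1) n := by
  simp only [mom, Nat.cast_succ, add_assoc, add_comm (1 : ℤ)]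

lemma mom_succ_level (hlam : ∀ j, lam j ≠ 0) (s : ℤ) (n i : ℕ) :
    mom lam c δ i s (n + 1) = mom lam c δ (i + 1) s n + δ n * mom lam c δ i s n := by
  simp only [mom, Finset.prod_range_succ, Finset.mul_sum, ← Finset.sum_add_distrib]
  refine Finset.sum_congr rfl fun j _ => ?_
  rw [Nat.cast_succ, add_right_comm, zpow_add_one₀ (hlam j)]
  ring

lemma mom_eq_sum_mul_pow (hlam : ∀ j, lam j ≠ 0) (i : ℕ) (s : ℤ) (n : ℕ) :
    mom lam c δ i s n =
      ∑ j, (c j * lam j ^ s * ∏ l ∈ range n, (lam j + δ l)) * lam j ^ i := by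
  refine Finset.sum_congr rfl fun j _ => ?_
  rw [zpow_add₀ (hlam j), zpow_natCast]
  ring

lemma hankelDet_mom_succ (hlam : ∀ j, lam j ≠ 0) (s : ℤ) (n : ℕ) :
    hankelDet (fun m => mom lam c δ (m + 1) s n) N =
      (∏ j, lam j) * hankelDet (fun m => mom lam c δ m s n) N := by
  simp only [mom_eq_sum_mul_pow lam c δ hlam]
  exact hankelDet_sum_mul_pow_succ _ lam

lemma tauH_eq_hankelDet (i : ℕ) (s : ℤ) (n : ℕ) :
    tauH lam c δ i s n = hankelDet (fun m => mom lam c δ m s n) i :=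
  rfl

lemma tauH_add_one (i : ℕ) (s : ℤ) (n : ℕ) :
    tauH lam c δ i (s + 1) n = hankelDet (fun m => mom lam c δ (m + 1) s n) i := by
  simp only [tauH_eq_hankelDet, mom_succ_index]

lemma Qsn_eq_hankelQ (i : ℕ) (s : ℤ) (n : ℕ) :
    Qsn lam c δ i s n =
      hankelQ (fun m => mom lam c δ m s n) (fun m => mom lam c δ (m + 1) s n) i := by
  simp only [Qsn, hankelQ, tauH_add_one]
  rfl

lemma Esn_eq_hankelE {i : ℕ} (hi : i ≠ 0) (hiN : i ≠ N) (s : ℤ) (n : ℕ) :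
    Esn lam c δ i s n =
      hankelE (fun m => mom lam c δ m s n) (fun m => mom lam c δ (m + 1) s n) i := by
  simp only [Esn, hi, hiN, or_self, if_false, hankelE, tauH_add_one]
  rfl

lemma Qbsn_add_one_eq_hankelQ (i : ℕ) (s : ℤ) (n : ℕ) :
    Qbsn lam c δ i (s + 1) n =
      hankelQ (fun m => mom lam c δ (m + 1) s n) (fun m => mom lam c δ (m + 1) s (n + 1)) i := by
  simp only [Qbsn, hankelQ, tauH_add_one]

lemma Ebsn_add_one_eq_hankelE {i : ℕ} (hi : i ≠ 0) (hiN : i ≠ N) (s : ℤ) (n : ℕ) :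
    Ebsn lam c δ i (s + 1) n =
      hankelE (fun m => mom lam c δ (m + 1) s n) (fun m => mom lam c δ (m + 1) s (n + 1)) i := by
  simp only [Ebsn, hi, hiN, or_self, if_false, hankelE, tauH_add_one]

end Moments

theorem stmt8_general (N : ℕ) (lam c : Fin N → ℝ) (δ : ℕ → ℝ)
    (hlam : ∀ j, lam j ≠ 0) (s : ℤ) (n : ℕ)
    (h1 : ∀ i, 1 ≤ i → i ≤ N → tauH lam c δ i s n ≠ 0)
    (h4 : ∀ i, 1 ≤ i → i ≤ N → tauH lam c δ i s (n + 1) ≠ 0)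
    (h5 : ∀ i, 1 ≤ i → i ≤ N → tauH lam c δ i (s - 1) (n + 1) ≠ 0) :
    (∀ i, 1 ≤ i → i ≤ N →
      Qsn lam c δ i (s - 1) (n + 1) + Esn lam c δ i (s - 1) (n + 1)
        = Qbsn lam c δ i s n + Ebsn lam c δ i s n - δ n) ∧
    (∀ i, 1 ≤ i → i ≤ N - 1 →
      Qsn lam c δ (i + 1) (s - 1) (n + 1) * Esn lam c δ i (s - 1) (n + 1)
        = Qbsn lam c δ (i + 1) s n * Ebsn lam c δ i s n) := by
  obtain ⟨t, rfl⟩ : ∃ t, s = t + 1 := ⟨s - 1, by ring⟩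
  simp only [add_sub_cancel_right, tauH_add_one] at h1 h4 h5 ⊢
  simp only [tauH_eq_hankelDet] at h5
  have hmom := mom_succ_level lam c δ hlam t n
  refine ⟨fun i hi hiN => ?_, fun i hi hiN => ?_⟩
  · obtain ⟨m, rfl⟩ : ∃ m, i = m + 1 := ⟨i - 1, by omega⟩
    rcases hiN.lt_or_eq with hlt | rfl
    · rw [Qsn_eq_hankelQ, Esn_eq_hankelE _ _ _ (by omega) hlt.ne, Qbsn_add_one_eq_hankelQ,
        Ebsn_add_one_eq_hankelE _ _ _ (by omega) hlt.ne]
      exact hankelQ_add_hankelE (u := fun m => mom lam c δ m t n) hmom (h5 _ hi hiN)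
        (hankelDet_ne_zero_of_forall h4 (by omega)) (h4 _ hi hiN) (h1 _ hi hiN)
    · simp only [Esn, Ebsn, or_true, if_true, add_zero, Qsn_eq_hankelQ, Qbsn_add_one_eq_hankelQ]
      exact hankelQ_eq_hankelQ_sub_of_shift_eq_mul (u := fun m => mom lam c δ m t n) hmom
        (hankelDet_mom_succ lam c δ hlam t n) (hankelDet_mom_succ lam c δ hlam t (n + 1))
        (h1 _ hi hiN) (h5 _ hi hiN) (hankelDet_ne_zero_of_forall h4 (by omega))
  · rw [Qsn_eq_hankelQ, Esn_eq_hankelE _ _ _ (by omega) (by omega), Qbsn_add_one_eq_hankelQ,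
      Ebsn_add_one_eq_hankelE _ _ _ (by omega) (by omega),
      hankelQ_succ_mul_hankelE _ _ (h5 _ hi (by omega)) (h5 _ (by omega) (by omega)),
      hankelQ_succ_mul_hankelE _ _ (h1 _ hi (by omega)) (h1 _ (by omega) (by omega))]

theorem stmt8 (N : ℕ) (hN : 1 ≤ N) (lam c : Fin N → ℝ) (δ : ℕ → ℝ)
    (hlam : ∀ j, lam j ≠ 0) (s : ℤ) (n : ℕ)
    (h1 : ∀ i, 1 ≤ i → i ≤ N → tauH lam c δ i s n ≠ 0)
    (h2 : ∀ i, 1 ≤ i → i ≤ N → tauH lam c δ i (s - 1) n ≠ 0)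
    (h3 : ∀ i, 1 ≤ i → i ≤ N → tauH lam c δ i (s + 1) n ≠ 0)
    (h4 : ∀ i, 1 ≤ i → i ≤ N → tauH lam c δ i s (n + 1) ≠ 0)
    (h5 : ∀ i, 1 ≤ i → i ≤ N → tauH lam c δ i (s - 1) (n + 1) ≠ 0) :
    (∀ i, 1 ≤ i → i ≤ N →
      Qsn lam c δ i (s - 1) (n + 1) + Esn lam c δ i (s - 1) (n + 1)
        = Qbsn lam c δ i s n + Ebsn lam c δ i s n - δ n) ∧
    (∀ i, 1 ≤ i → i ≤ N - 1 →
      Qsn lam c δ (i + 1) (s - 1) (n + 1) * Esn lam c δ i (s - 1) (n + 1)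
        = Qbsn lam c δ (i + 1) s n * Ebsn lam c δ i s n) :=
  stmt8_general N lam c δ hlam s n h1 h4 h5
end

section
/- Let N ≥ 1 and δ a real number. Let Q_1,…,Q_N, Q̄_1,…,Q̄_N, Q'_1,…,Q'_N be positive reals and E_1,…,E_{N−1}, Ē_1,…,Ē_{N−1}, E'_1,…,E'_{N−1} be positive reals, with conventions E_0 = Ē_0 = E'_0 := 0 and E_N = Ē_N = E'_N := 0, satisfying: Q̄_i + Ē_{i−1} − δ = Q_i + E_{i−1} (i = 1,…,N), Q̄_i Ē_i = Q_i E_i (i = 1,…,N−1), Q'_i + E'_i = Q̄_i + Ē_i − δ (i = 1,…,N), and Q'_{i+1} E'_i = Q̄_{i+1} Ē_i (i = 1,…,N−1). Define the N×N lower bidiagonal matrix L with diagonal entries √(Q_i) and subdiagonal entries L_{i+1,i} = −√(E_i), set R := Lᵀ, and analogously define L̄, R̄ from Q̄, Ē and L', R' from Q', E'. Then L̄ R̄ − δ I = L R and R' L' = R̄ L̄ − δ I. -/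
open Finset Matrix

/-- The lower bidiagonal matrix L with diagonal √(Q_i) and subdiagonal L_{i+1,i} = −√(E_i)
(1-based data Q, E). -/
noncomputable def bidiagL (N : ℕ) (Q E : ℕ → ℝ) : Matrix (Fin N) (Fin N) ℝ :=
  Matrix.of fun i j =>
    if i.1 = j.1 then Real.sqrt (Q (i.1 + 1))
    else if i.1 = j.1 + 1 then -Real.sqrt (E (j.1 + 1))
    else 0

private lemma sum_two' {n : ℕ} (f : Fin n → ℝ) (a b : Fin n) (hab : a ≠ b)
    (h : ∀ k, k ≠ a → k ≠ b → f k = 0) : ∑ k, f k = f a + f b := by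
  have h1 : ∑ k, f k = ∑ k ∈ ({a, b} : Finset (Fin n)), f k := by
    refine (Finset.sum_subset (Finset.subset_univ _) ?_).symm
    intro x _ hx
    simp only [Finset.mem_insert, Finset.mem_singleton, not_or] at hx
    exact h x hx.1 hx.2
  rw [h1, Finset.sum_pair hab]

private lemma sum_one' {n : ℕ} (f : Fin n → ℝ) (a : Fin n)
    (h : ∀ k, k ≠ a → f k = 0) : ∑ k, f k = f a :=
  Finset.sum_eq_single_of_mem a (Finset.mem_univ a) (fun k _ hk => h k hk)

/-- Entries of L Lᵀ. -/
private lemma mulT_apply (N : ℕ) (Q E : ℕ → ℝ)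
    (hQ : ∀ i, 1 ≤ i → i ≤ N → 0 ≤ Q i)
    (hE : ∀ i, 1 ≤ i → i ≤ N - 1 → 0 ≤ E i)
    (hE0 : E 0 = 0) (i j : Fin N) :
    (bidiagL N Q E * (bidiagL N Q E)ᵀ) i j =
      if i.1 = j.1 then Q (i.1 + 1) + E i.1
      else if i.1 = j.1 + 1 then -(Real.sqrt (E i.1) * Real.sqrt (Q i.1))
      else if j.1 = i.1 + 1 then -(Real.sqrt (E j.1) * Real.sqrt (Q j.1))
      else 0 := by
  have hE' : ∀ m : ℕ, m < N → 0 ≤ E m := by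
    intro m hm
    rcases Nat.eq_zero_or_pos m with h | h
    · simp [h, hE0]
    · exact hE m h (by omega)
  obtain ⟨iv, hiN⟩ := i
  obtain ⟨jv, hjN⟩ := j
  rw [Matrix.mul_apply]
  simp only [bidiagL, Matrix.transpose_apply, Matrix.of_apply, Fin.val_mk]
  rcases Nat.lt_trichotomy iv jv with hij | hij | hij
  · -- i < j
    by_cases hj : jv = iv + 1
    · subst hj
      rw [sum_one' _ ⟨iv, hiN⟩ ?_]
      · simp only [Fin.val_mk]
        split_ifs <;> first | omega | ring
      · intro k hk
        have hk1 : ¬ (k.1 = iv) := fun h => hk (Fin.ext (by simp [h]))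
        split_ifs <;> first | omega | ring
    · rw [Finset.sum_eq_zero fun k _ => ?_]
      · split_ifs <;> first | omega | ring
      · split_ifs <;> first | omega | ring
  · -- diagonal
    subst hij
    by_cases h0 : iv = 0
    · rw [sum_one' _ ⟨iv, hiN⟩ ?_]
      · simp only [Fin.val_mk]
        split_ifs <;> first | omega |
          (rw [Real.mul_self_sqrt (hQ (iv + 1) (by omega) (by omega)), h0, hE0]; ring)
      · intro k hk
        have hk1 : ¬ (k.1 = iv) := fun h => hk (Fin.ext (by simp [h]))
        split_ifs <;> first | omega | ring
    · rw [sum_two' _ ⟨iv, hiN⟩ ⟨iv - 1, by omega⟩ ?_ ?_]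
      · simp only [Fin.val_mk]
        split_ifs <;> first | omega |
          (rw [show iv - 1 + 1 = iv from by omega, neg_mul_neg,
            Real.mul_self_sqrt (hQ (iv + 1) (by omega) (by omega)),
            Real.mul_self_sqrt (hE' iv hiN)])
      · intro h
        have h2 := congrArg Fin.val h
        simp only [Fin.val_mk] at h2
        omega
      · intro k hk1 hk2
        have hk1' : ¬ (k.1 = iv) := fun h => hk1 (Fin.ext (by simp [h]))
        have hk2' : ¬ (k.1 = iv - 1) := fun h => hk2 (Fin.ext (by simp [h]))
        split_ifs <;> first | omega | ring
  · -- i > j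
    by_cases hi : iv = jv + 1
    · subst hi
      rw [sum_one' _ ⟨jv, hjN⟩ ?_]
      · simp only [Fin.val_mk]
        split_ifs <;> first | omega | ring
      · intro k hk
        have hk1 : ¬ (k.1 = jv) := fun h => hk (Fin.ext (by simp [h]))
        split_ifs <;> first | omega | ring
    · rw [Finset.sum_eq_zero fun k _ => ?_]
      · split_ifs <;> first | omega | ring
      · split_ifs <;> first | omega | ring

/-- Entries of Lᵀ L. -/
private lemma Tmul_apply (N : ℕ) (Q E : ℕ → ℝ)
    (hQ : ∀ i, 1 ≤ i → i ≤ N → 0 ≤ Q i)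
    (hE : ∀ i, 1 ≤ i → i ≤ N - 1 → 0 ≤ E i)
    (hEN : E N = 0) (i j : Fin N) :
    ((bidiagL N Q E)ᵀ * bidiagL N Q E) i j =
      if i.1 = j.1 then Q (i.1 + 1) + E (i.1 + 1)
      else if i.1 = j.1 + 1 then -(Real.sqrt (E i.1) * Real.sqrt (Q (i.1 + 1)))
      else if j.1 = i.1 + 1 then -(Real.sqrt (E j.1) * Real.sqrt (Q (j.1 + 1)))
      else 0 := by
  have hE' : ∀ m : ℕ, 1 ≤ m → m ≤ N → 0 ≤ E m := by
    intro m h1m h2m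
    rcases Nat.lt_or_ge m N with h | h
    · exact hE m h1m (by omega)
    · have hmN : m = N := by omega
      simp [hmN, hEN]
  obtain ⟨iv, hiN⟩ := i
  obtain ⟨jv, hjN⟩ := j
  rw [Matrix.mul_apply]
  simp only [bidiagL, Matrix.transpose_apply, Matrix.of_apply, Fin.val_mk]
  rcases Nat.lt_trichotomy iv jv with hij | hij | hij
  · -- i < j
    by_cases hj : jv = iv + 1
    · subst hj
      rw [sum_one' _ ⟨iv + 1, hjN⟩ ?_]
      · simp only [Fin.val_mk]
        split_ifs <;> first | omega | ring
      · intro k hk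
        have hk1 : ¬ (k.1 = iv + 1) := fun h => hk (Fin.ext (by simp [h]))
        split_ifs <;> first | omega | ring
    · rw [Finset.sum_eq_zero fun k _ => ?_]
      · split_ifs <;> first | omega | ring
      · split_ifs <;> first | omega | ring
  · -- diagonal
    subst hij
    by_cases hlast : iv + 1 < N
    · rw [sum_two' _ ⟨iv, hiN⟩ ⟨iv + 1, hlast⟩ ?_ ?_]
      · simp only [Fin.val_mk]
        split_ifs <;> first | omega |
          (rw [neg_mul_neg, Real.mul_self_sqrt (hQ (iv + 1) (by omega) (by omega)),
            Real.mul_self_sqrt (hE' (iv + 1) (by omega) (by omega))])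
      · intro h
        have h2 := congrArg Fin.val h
        simp only [Fin.val_mk] at h2
        omega
      · intro k hk1 hk2
        have hk1' : ¬ (k.1 = iv) := fun h => hk1 (Fin.ext (by simp [h]))
        have hk2' : ¬ (k.1 = iv + 1) := fun h => hk2 (Fin.ext (by simp [h]))
        split_ifs <;> first | omega | ring
    · have hiN' : iv + 1 = N := by omega
      rw [sum_one' _ ⟨iv, hiN⟩ ?_]
      · simp only [Fin.val_mk]
        split_ifs <;> first | omega |
          (rw [Real.mul_self_sqrt (hQ (iv + 1) (by omega) (by omega)), hiN', hEN]; ring)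
      · intro k hk
        have hk1 : ¬ (k.1 = iv) := fun h => hk (Fin.ext (by simp [h]))
        split_ifs <;> first | omega | ring
  · -- i > j
    by_cases hi : iv = jv + 1
    · subst hi
      rw [sum_one' _ ⟨jv + 1, hiN⟩ ?_]
      · simp only [Fin.val_mk]
        split_ifs <;> first | omega | ring
      · intro k hk
        have hk1 : ¬ (k.1 = jv + 1) := fun h => hk (Fin.ext (by simp [h]))
        split_ifs <;> first | omega | ring
    · rw [Finset.sum_eq_zero fun k _ => ?_]
      · split_ifs <;> first | omega | ring
      · split_ifs <;> first | omega | ring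

theorem stmt9 (N : ℕ) (hN : 1 ≤ N) (δ : ℝ)
    (Q Qb Q' E Eb E' : ℕ → ℝ)
    (hQ : ∀ i, 1 ≤ i → i ≤ N → 0 < Q i)
    (hQb : ∀ i, 1 ≤ i → i ≤ N → 0 < Qb i)
    (hQ' : ∀ i, 1 ≤ i → i ≤ N → 0 < Q' i)
    (hE : ∀ i, 1 ≤ i → i ≤ N - 1 → 0 < E i)
    (hEb : ∀ i, 1 ≤ i → i ≤ N - 1 → 0 < Eb i)
    (hE' : ∀ i, 1 ≤ i → i ≤ N - 1 → 0 < E' i)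
    (hE0 : E 0 = 0) (hEb0 : Eb 0 = 0) (hE'0 : E' 0 = 0)
    (hEN : E N = 0) (hEbN : Eb N = 0) (hE'N : E' N = 0)
    (h1 : ∀ i, 1 ≤ i → i ≤ N → Qb i + Eb (i - 1) - δ = Q i + E (i - 1))
    (h2 : ∀ i, 1 ≤ i → i ≤ N - 1 → Qb i * Eb i = Q i * E i)
    (h3 : ∀ i, 1 ≤ i → i ≤ N → Q' i + E' i = Qb i + Eb i - δ)
    (h4 : ∀ i, 1 ≤ i → i ≤ N - 1 → Q' (i + 1) * E' i = Qb (i + 1) * Eb i) :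
    bidiagL N Qb Eb * (bidiagL N Qb Eb)ᵀ - δ • (1 : Matrix (Fin N) (Fin N) ℝ)
        = bidiagL N Q E * (bidiagL N Q E)ᵀ ∧
    (bidiagL N Q' E')ᵀ * bidiagL N Q' E'
        = (bidiagL N Qb Eb)ᵀ * bidiagL N Qb Eb - δ • (1 : Matrix (Fin N) (Fin N) ℝ) := by
  constructor
  · ext i j
    rw [Matrix.sub_apply, Matrix.smul_apply, Matrix.one_apply,
      mulT_apply N Qb Eb (fun i h1 h2 => (hQb i h1 h2).le) (fun i h1 h2 => (hEb i h1 h2).le) hEb0,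
      mulT_apply N Q E (fun i h1 h2 => (hQ i h1 h2).le) (fun i h1 h2 => (hE i h1 h2).le) hE0]
    by_cases hij : i.1 = j.1
    · rw [if_pos hij, if_pos hij, if_pos (Fin.ext hij), smul_eq_mul, mul_one]
      have := h1 (i.1 + 1) (by omega) (by omega)
      simp only [Nat.add_sub_cancel] at this
      linarith
    · rw [if_neg hij, if_neg hij, if_neg (fun h => hij (congrArg Fin.val h)),
        smul_eq_mul, mul_zero, sub_zero]
      by_cases h : i.1 = j.1 + 1
      · rw [if_pos h, if_pos h]
        have hi1 : 1 ≤ i.1 := by omega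
        have hi2 : i.1 ≤ N - 1 := by omega
        have key := h2 i.1 hi1 hi2
        rw [← Real.sqrt_mul (hEb i.1 hi1 hi2).le, ← Real.sqrt_mul (hE i.1 hi1 hi2).le]
        rw [mul_comm (Eb i.1), mul_comm (E i.1), key]
      · rw [if_neg h, if_neg h]
        by_cases h' : j.1 = i.1 + 1
        · rw [if_pos h', if_pos h']
          have hj1 : 1 ≤ j.1 := by omega
          have hj2 : j.1 ≤ N - 1 := by omega
          have key := h2 j.1 hj1 hj2
          rw [← Real.sqrt_mul (hEb j.1 hj1 hj2).le, ← Real.sqrt_mul (hE j.1 hj1 hj2).le]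
          rw [mul_comm (Eb j.1), mul_comm (E j.1), key]
        · rw [if_neg h', if_neg h']
  · ext i j
    rw [Matrix.sub_apply, Matrix.smul_apply, Matrix.one_apply,
      Tmul_apply N Q' E' (fun i h1 h2 => (hQ' i h1 h2).le) (fun i h1 h2 => (hE' i h1 h2).le) hE'N,
      Tmul_apply N Qb Eb (fun i h1 h2 => (hQb i h1 h2).le) (fun i h1 h2 => (hEb i h1 h2).le) hEbN]
    by_cases hij : i.1 = j.1
    · rw [if_pos hij, if_pos hij, if_pos (Fin.ext hij), smul_eq_mul, mul_one]
      have := h3 (i.1 + 1) (by omega) (by omega)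
      linarith
    · rw [if_neg hij, if_neg hij, if_neg (fun h => hij (congrArg Fin.val h)),
        smul_eq_mul, mul_zero, sub_zero]
      by_cases h : i.1 = j.1 + 1
      · rw [if_pos h, if_pos h]
        have hi1 : 1 ≤ i.1 := by omega
        have hi2 : i.1 ≤ N - 1 := by omega
        have key := h4 i.1 hi1 hi2
        rw [← Real.sqrt_mul (hE' i.1 hi1 hi2).le, ← Real.sqrt_mul (hEb i.1 hi1 hi2).le]
        rw [mul_comm (E' i.1), mul_comm (Eb i.1), key]
      · rw [if_neg h, if_neg h]
        by_cases h' : j.1 = i.1 + 1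
        · rw [if_pos h', if_pos h']
          have hj1 : 1 ≤ j.1 := by omega
          have hj2 : j.1 ≤ N - 1 := by omega
          have key := h4 j.1 hj1 hj2
          rw [← Real.sqrt_mul (hE' j.1 hj1 hj2).le, ← Real.sqrt_mul (hEb j.1 hj1 hj2).le]
          rw [mul_comm (E' j.1), mul_comm (Eb j.1), key]
        · rw [if_neg h', if_neg h']
end

section
/- Let N ≥ 1 and let δ, δ' be nonzero reals. Let L, R, L̄, R̄ and L', R', L̄', R̄' be N×N real matrices, all invertible, satisfying: L̄ R̄ − δ I = L R, R' L' = R̄ L̄ − δ I, and L̄' R̄' − δ' I = L' R'. Set ℒ := L^{−1} L̄, ℛ := R̄ R^{−1}, ℒ' := (L')^{−1} L̄', ℛ' := R̄' (R')^{−1}. Then (1/δ')(ℒ' ℛ' − I) = (1/δ)(ℛ ℒ − I). -/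
open Matrix

theorem stmt11 (N : ℕ) (hN : 1 ≤ N) (δ δ' : ℝ) (hδ : δ ≠ 0) (hδ' : δ' ≠ 0)
    (L R Lb Rb L' R' Lb' Rb' : Matrix (Fin N) (Fin N) ℝ)
    (hL : IsUnit L.det) (hR : IsUnit R.det) (hLb : IsUnit Lb.det) (hRb : IsUnit Rb.det)
    (hL' : IsUnit L'.det) (hR' : IsUnit R'.det) (hLb' : IsUnit Lb'.det) (hRb' : IsUnit Rb'.det)
    (h1 : Lb * Rb - δ • (1 : Matrix (Fin N) (Fin N) ℝ) = L * R)
    (h2 : R' * L' = Rb * Lb - δ • (1 : Matrix (Fin N) (Fin N) ℝ))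
    (h3 : Lb' * Rb' - δ' • (1 : Matrix (Fin N) (Fin N) ℝ) = L' * R') :
    (1 / δ') • ((L'⁻¹ * Lb') * (Rb' * R'⁻¹) - (1 : Matrix (Fin N) (Fin N) ℝ))
      = (1 / δ) • ((Rb * R⁻¹) * (L⁻¹ * Lb) - (1 : Matrix (Fin N) (Fin N) ℝ)) := by
  have hA : IsUnit (R' * L').det := by rw [det_mul]; exact hR'.mul hL'
  have hB : IsUnit (L * R).det := by rw [det_mul]; exact hL.mul hR
  -- LHS = (R'*L')⁻¹
  have hLb'Rb' : Lb' * Rb' = L' * R' + δ' • (1 : Matrix (Fin N) (Fin N) ℝ) := by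
    rw [← h3]; abel
  have lhs_eq : (L'⁻¹ * Lb') * (Rb' * R'⁻¹) - (1 : Matrix (Fin N) (Fin N) ℝ)
      = δ' • (R' * L')⁻¹ := by
    have : (L'⁻¹ * Lb') * (Rb' * R'⁻¹) = L'⁻¹ * (Lb' * Rb') * R'⁻¹ := by
      noncomm_ring
    rw [this, hLb'Rb', Matrix.mul_inv_rev]
    rw [mul_add, add_mul, Matrix.mul_smul, Matrix.smul_mul, mul_one]
    rw [← Matrix.mul_assoc L'⁻¹ L' R', Matrix.nonsing_inv_mul _ hL', Matrix.one_mul,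
      Matrix.mul_nonsing_inv _ hR']
    abel
  -- RHS
  have hRbB : Rb * (L * R) = (R' * L') * Rb := by
    rw [← h1, h2]
    noncomm_ring
  have hRbBinv : Rb * (L * R)⁻¹ = (R' * L')⁻¹ * Rb := by
    calc Rb * (L * R)⁻¹ = (R' * L')⁻¹ * (R' * L') * (Rb * (L * R)⁻¹) := by
          rw [Matrix.nonsing_inv_mul _ hA, Matrix.one_mul]
      _ = (R' * L')⁻¹ * (Rb * (L * R) * (L * R)⁻¹) := by rw [hRbB]; noncomm_ring
      _ = (R' * L')⁻¹ * Rb := by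
          rw [Matrix.mul_assoc Rb, Matrix.mul_nonsing_inv _ hB, Matrix.mul_one]
  have rhs_eq : (Rb * R⁻¹) * (L⁻¹ * Lb) - (1 : Matrix (Fin N) (Fin N) ℝ)
      = δ • (R' * L')⁻¹ := by
    have hRL : R⁻¹ * L⁻¹ = (L * R)⁻¹ := (Matrix.mul_inv_rev L R).symm
    have : (Rb * R⁻¹) * (L⁻¹ * Lb) = Rb * (L * R)⁻¹ * Lb := by
      rw [← hRL]; noncomm_ring
    rw [this, hRbBinv, Matrix.mul_assoc]
    have hRbLb : Rb * Lb = (R' * L') + δ • (1 : Matrix (Fin N) (Fin N) ℝ) := by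
      rw [h2]; abel
    rw [hRbLb, mul_add, Matrix.nonsing_inv_mul _ hA, Matrix.mul_smul, Matrix.mul_one]
    abel
  rw [lhs_eq, rhs_eq, smul_smul, smul_smul, one_div_mul_cancel hδ', one_div_mul_cancel hδ]
end

section
/- Let N ≥ 1 and δ > 0. Let Q_1,…,Q_N, Q̄_1,…,Q̄_N be positive reals and E_1,…,E_{N−1}, Ē_1,…,Ē_{N−1} be positive reals, with conventions E_0 = Ē_0 := 0, satisfying Q̄_i + Ē_{i−1} − δ = Q_i + E_{i−1} for i = 1,…,N and Q̄_i Ē_i = Q_i E_i for i = 1,…,N−1. Define p_i := (Q̄_i/Q_i − 1)/δ for i = 1,…,N and assume each p_i > 0; let x_1,…,x_N be reals satisfying e^{x_{i+1}−x_i} = p_i E_i/(p_{i+1} Q_{i+1}) for i = 1,…,N−1. Define the N×N upper bidiagonal matrix R with diagonal entries √(Q_i) and superdiagonal entries R_{i,i+1} = −√(E_i), and R̄ analogously from Q̄, Ē. Then the matrix R̄ R^{−1} is upper triangular with diagonal entries (R̄R^{−1})_{ii} = √(1 + δ p_i) and, for j > i, entries (R̄R^{−1})_{ij} = (δ p_i/√(1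 + δ p_i))·√(p_j e^{x_j}/(p_i e^{x_i})). -/
/-!
Let `T` be the upper triangular matrix with diagonal `√(1 + δ pᵢ)` and entries `uᵢ vⱼ` above
the diagonal, where `vⱼ = √(pⱼ e^{xⱼ})` and `uᵢ = δ pᵢ / (√(1 + δ pᵢ) vᵢ)`. Instead of inverting
`R` we check `T R = R̄`. As `R` is upper bidiagonal, column `j` of `T R` only involves columns `j`
and `j - 1` of `T`. On the diagonal the identity is `Q̄ᵢ = Qᵢ (1 + δ pᵢ)`, the definition of `pᵢ`;
on the superdiagonal it is `Ēᵢ = Eᵢ / (1 + δ pᵢ)`, which follows from `Q̄ᵢ Ēᵢ = Qᵢ Eᵢ`; further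
up the entries cancel because the exponential relation says exactly
`p_{j+1} e^{x_{j+1}} Q_{j+1} = pⱼ e^{xⱼ} Eⱼ`, i.e. `v_{j+1} √Q_{j+1} = vⱼ √Eⱼ`.
-/

open Matrix

/-- The upper bidiagonal matrix R with diagonal √(Q_i) and superdiagonal R_{i,i+1} = −√(E_i)
(1-based data Q, E). -/
noncomputable def bidiagR (N : ℕ) (Q E : ℕ → ℝ) : Matrix (Fin N) (Fin N) ℝ :=
  Matrix.of fun i j =>
    if i.1 = j.1 then Real.sqrt (Q (i.1 + 1))
    else if j.1 = i.1 + 1 then -Real.sqrt (E (i.1 + 1))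
    else 0

/-- p_i := (Q̄_i/Q_i − 1)/δ. -/
noncomputable def pVar (δ : ℝ) (Q Qb : ℕ → ℝ) (i : ℕ) : ℝ :=
  (Qb i / Q i - 1) / δ

section Bidiagonal

variable {N : ℕ} {Q E : ℕ → ℝ}

lemma bidiagR_apply_self (i : Fin N) : bidiagR N Q E i i = √(Q (i.1 + 1)) := by
  simp [bidiagR]

lemma bidiagR_apply_of_succ {i j : Fin N} (h : i.1 + 1 = j.1) :
    bidiagR N Q E i j = -√(E (i.1 + 1)) := by
  simp [bidiagR, ← h]

lemma bidiagR_apply_of_ne {i j : Fin N} (hij : i ≠ j) (hsucc : i.1 + 1 ≠ j.1) :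
    bidiagR N Q E i j = 0 := by
  simp [bidiagR, Fin.val_ne_of_ne hij, Ne.symm hsucc]

lemma bidiagR_isUpperTriangular : (bidiagR N Q E).IsUpperTriangular := by
  intro i j hji
  exact bidiagR_apply_of_ne (ne_of_gt hji) (by simp only [id, Fin.lt_def] at hji; omega)

lemma isUnit_det_bidiagR (hQ : ∀ i : Fin N, 0 < Q (i.1 + 1)) : IsUnit (bidiagR N Q E).det := by
  rw [det_of_isUpperTriangular bidiagR_isUpperTriangular, isUnit_iff_ne_zero]
  exact Finset.prod_ne_zero_iff.mpr fun i _ => by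
    simpa [bidiagR_apply_self] using (Real.sqrt_pos.mpr (hQ i)).ne'

lemma mul_bidiagR_apply_of_val_eq_zero (A : Matrix (Fin N) (Fin N) ℝ) (i : Fin N) {j : Fin N}
    (hj : j.1 = 0) : (A * bidiagR N Q E) i j = A i j * √(Q 1) := by
  rw [mul_apply, Fintype.sum_eq_single j fun k hk => by
    rw [bidiagR_apply_of_ne hk (by omega), mul_zero], bidiagR_apply_self, hj]

lemma mul_bidiagR_apply_of_succ (A : Matrix (Fin N) (Fin N) ℝ) (i : Fin N) {k j : Fin N}
    (hkj : k.1 + 1 = j.1) :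
    (A * bidiagR N Q E) i j = A i j * √(Q (j.1 + 1)) - A i k * √(E (k.1 + 1)) := by
  have hjk : j ≠ k := fun h => by rw [h] at hkj; omega
  rw [mul_apply, Fintype.sum_eq_add j k hjk fun l hl => by
    rw [bidiagR_apply_of_ne hl.1 fun h => hl.2 (Fin.ext (by omega)), mul_zero],
    bidiagR_apply_self, bidiagR_apply_of_succ hkj, mul_neg, sub_eq_add_neg]

end Bidiagonal


noncomputable def upperSemiseparable (N : ℕ) (a u v : ℕ → ℝ) : Matrix (Fin N) (Fin N) ℝ :=
  of fun i j => if i = j then a (i.1 + 1) else if i < j then u (i.1 + 1) * v (j.1 + 1) else 0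

section Semiseparable

variable {N : ℕ} {a u v : ℕ → ℝ}

lemma upperSemiseparable_apply_self (i : Fin N) :
    upperSemiseparable N a u v i i = a (i.1 + 1) := by
  simp [upperSemiseparable]

lemma upperSemiseparable_apply_of_lt {i j : Fin N} (h : i < j) :
    upperSemiseparable N a u v i j = u (i.1 + 1) * v (j.1 + 1) := by
  simp [upperSemiseparable, h, h.ne]

lemma upperSemiseparable_apply_of_gt {i j : Fin N} (h : j < i) :
    upperSemiseparable N a u v i j = 0 := by
  simp [upperSemiseparable, h.ne', h.not_gt]

theorem upperSemiseparable_mul_bidiagR {Q E Qb Eb : ℕ → ℝ}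
    (hdiag : ∀ i, 1 ≤ i → i ≤ N → a i * √(Q i) = √(Qb i))
    (hsuper : ∀ i, 1 ≤ i → i < N → (u i * v i - a i) * √(E i) = -√(Eb i))
    (hv : ∀ i, 1 ≤ i → i < N → v (i + 1) * √(Q (i + 1)) = v i * √(E i)) :
    upperSemiseparable N a u v * bidiagR N Q E = bidiagR N Qb Eb := by
  ext i j
  by_cases hj : j.1 = 0
  · rw [mul_bidiagR_apply_of_val_eq_zero _ _ hj]
    rcases eq_or_ne i j with rfl | hij
    · rw [upperSemiseparable_apply_self, bidiagR_apply_self, hj, hdiag 1 le_rfl (by omega)]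
    · have hji : j < i := Fin.lt_def.mpr (by have := Fin.val_ne_of_ne hij; omega)
      rw [upperSemiseparable_apply_of_gt hji, zero_mul, bidiagR_apply_of_ne hij (by omega)]
  set k : Fin N := ⟨j.1 - 1, by omega⟩
  have hkj : k.1 + 1 = j.1 := by simp only [k]; omega
  rw [mul_bidiagR_apply_of_succ _ _ hkj]
  rcases lt_trichotomy i k with hik | rfl | hki
  · have hij : i < j := hik.trans (Fin.lt_def.mpr (by omega))
    rw [upperSemiseparable_apply_of_lt hik, upperSemiseparable_apply_of_lt hij,
      bidiagR_apply_of_ne hij.ne (by rw [Fin.lt_def] at hik; omega), ← hkj,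
      mul_assoc, hv _ (by omega) (by omega)]
    ring
  · have hkj' : k < j := Fin.lt_def.mpr (by omega)
    rw [upperSemiseparable_apply_self, upperSemiseparable_apply_of_lt hkj',
      bidiagR_apply_of_succ hkj, ← hkj, mul_assoc, hv _ (by omega) (by omega),
      ← hsuper _ (by omega) (by omega)]
    ring
  · rcases eq_or_ne i j with rfl | hij
    · rw [upperSemiseparable_apply_self, upperSemiseparable_apply_of_gt hki, bidiagR_apply_self,
        hdiag _ (by omega) i.2, zero_mul, sub_zero]
    · have hji : j < i := Fin.lt_def.mpr (by
        have := Fin.val_ne_of_ne hij; rw [Fin.lt_def] at hki; omega)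
      rw [upperSemiseparable_apply_of_gt hji, upperSemiseparable_apply_of_gt hki,
        bidiagR_apply_of_ne hij (by omega)]
      ring

end Semiseparable

lemma mul_one_add_mul_pVar {δ : ℝ} {Q Qb : ℕ → ℝ} {i : ℕ} (hδ : δ ≠ 0) (hQ : Q i ≠ 0) :
    Q i * (1 + δ * pVar δ Q Qb i) = Qb i := by
  unfold pVar
  field_simp
  ring

lemma eq_div_one_add_mul_pVar {δ : ℝ} {Q Qb E Eb : ℕ → ℝ} {i : ℕ} (hδ : δ ≠ 0) (hQ : Q i ≠ 0)
    (hd : 1 + δ * pVar δ Q Qb i ≠ 0) (h : Qb i * Eb i = Q i * E i) :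
    Eb i = E i / (1 + δ * pVar δ Q Qb i) := by
  rw [eq_div_iff hd]
  refine mul_left_cancel₀ hQ ?_
  linear_combination h + Eb i * mul_one_add_mul_pVar (Qb := Qb) hδ hQ

lemma div_sqrt_sub_sqrt_mul_sqrt {t : ℝ} (ht : 0 < 1 + t) (e : ℝ) :
    (t / √(1 + t) - √(1 + t)) * √e = -√(e / (1 + t)) := by
  have hs : 0 < √(1 + t) := Real.sqrt_pos.mpr ht
  rw [Real.sqrt_div' _ ht.le]
  field_simp
  rw [Real.sq_sqrt ht.le]
  ring

lemma mul_exp_mul_eq_of_exp_sub_eq {a b c d y z : ℝ} (hb : b ≠ 0) (hd : d ≠ 0)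
    (h : Real.exp (z - y) = a * c / (b * d)) : b * Real.exp z * d = a * Real.exp y * c := by
  rw [← sub_add_cancel z y, Real.exp_add, h]
  field_simp

theorem stmt12_general (N : ℕ) (δ : ℝ) (hδ : 0 < δ)
    (Q Qb E Eb : ℕ → ℝ)
    (hQ : ∀ i, 1 ≤ i → i ≤ N → 0 < Q i)
    (h2 : ∀ i, 1 ≤ i → i ≤ N - 1 → Qb i * Eb i = Q i * E i)
    (hp : ∀ i, 1 ≤ i → i ≤ N → 0 < pVar δ Q Qb i)
    (x : ℕ → ℝ)
    (hx : ∀ i, 1 ≤ i → i ≤ N - 1 →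
      Real.exp (x (i + 1) - x i)
        = pVar δ Q Qb i * E i / (pVar δ Q Qb (i + 1) * Q (i + 1))) :
    (∀ i j : Fin N, j < i → (bidiagR N Qb Eb * (bidiagR N Q E)⁻¹) i j = 0) ∧
    (∀ i : Fin N, (bidiagR N Qb Eb * (bidiagR N Q E)⁻¹) i i
        = Real.sqrt (1 + δ * pVar δ Q Qb (i.1 + 1))) ∧
    (∀ i j : Fin N, i < j → (bidiagR N Qb Eb * (bidiagR N Q E)⁻¹) i j
        = δ * pVar δ Q Qb (i.1 + 1) / Real.sqrt (1 + δ * pVar δ Q Qb (i.1 + 1)) *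
          Real.sqrt (pVar δ Q Qb (j.1 + 1) * Real.exp (x (j.1 + 1)) /
            (pVar δ Q Qb (i.1 + 1) * Real.exp (x (i.1 + 1))))) := by
  set p := pVar δ Q Qb
  set r : ℕ → ℝ := fun i => p i * Real.exp (x i)
  have hd (i) (hi : 1 ≤ i) (hiN : i ≤ N) : 0 < 1 + δ * p i := by
    have := hp i hi hiN; positivity
  have hr (i) (hi : 1 ≤ i) (hiN : i ≤ N) : 0 < r i := mul_pos (hp i hi hiN) (Real.exp_pos _)
  have hTR : upperSemiseparable N (fun i => √(1 + δ * p i))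
      (fun i => δ * p i / √(1 + δ * p i) / √(r i)) (fun i => √(r i)) * bidiagR N Q E
        = bidiagR N Qb Eb := by
    refine upperSemiseparable_mul_bidiagR (fun i hi hiN => ?_) (fun i hi hiN => ?_)
      (fun i hi hiN => ?_)
    · rw [← mul_one_add_mul_pVar (Qb := Qb) hδ.ne' (hQ i hi hiN).ne',
        Real.sqrt_mul (hQ i hi hiN).le, mul_comm]
    · rw [div_mul_cancel₀ _ (Real.sqrt_pos.mpr (hr i hi hiN.le)).ne', eq_div_one_add_mul_pVar
        hδ.ne' (hQ i hi hiN.le).ne' (hd i hi hiN.le).ne' (h2 i hi (by omega))]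
      exact div_sqrt_sub_sqrt_mul_sqrt (hd i hi hiN.le) _
    · rw [← Real.sqrt_mul (hr _ (by omega) hiN).le, ← Real.sqrt_mul (hr i hi hiN.le).le]
      exact congrArg _ (mul_exp_mul_eq_of_exp_sub_eq (hp _ (by omega) hiN).ne'
        (hQ _ (by omega) hiN).ne' (hx i hi (by omega)))
  have hR : IsUnit (bidiagR N Q E).det := isUnit_det_bidiagR fun i => hQ _ (by omega) i.2
  rw [← hTR, mul_nonsing_inv_cancel_right _ _ hR]
  refine ⟨fun i j => upperSemiseparable_apply_of_gt, fun i => upperSemiseparable_apply_self i,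
    fun i j hij => ?_⟩
  rw [upperSemiseparable_apply_of_lt hij, Real.sqrt_div' _ (hr _ (by omega) i.2).le]
  ring

theorem stmt12 (N : ℕ) (hN : 1 ≤ N) (δ : ℝ) (hδ : 0 < δ)
    (Q Qb E Eb : ℕ → ℝ)
    (hQ : ∀ i, 1 ≤ i → i ≤ N → 0 < Q i)
    (hQb : ∀ i, 1 ≤ i → i ≤ N → 0 < Qb i)
    (hE : ∀ i, 1 ≤ i → i ≤ N - 1 → 0 < E i)
    (hEb : ∀ i, 1 ≤ i → i ≤ N - 1 → 0 < Eb i)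
    (hE0 : E 0 = 0) (hEb0 : Eb 0 = 0)
    (h1 : ∀ i, 1 ≤ i → i ≤ N → Qb i + Eb (i - 1) - δ = Q i + E (i - 1))
    (h2 : ∀ i, 1 ≤ i → i ≤ N - 1 → Qb i * Eb i = Q i * E i)
    (hp : ∀ i, 1 ≤ i → i ≤ N → 0 < pVar δ Q Qb i)
    (x : ℕ → ℝ)
    (hx : ∀ i, 1 ≤ i → i ≤ N - 1 →
      Real.exp (x (i + 1) - x i)
        = pVar δ Q Qb i * E i / (pVar δ Q Qb (i + 1) * Q (i + 1))) :
    (∀ i j : Fin N, j < i → (bidiagR N Qb Eb * (bidiagR N Q E)⁻¹) i j = 0) ∧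
    (∀ i : Fin N, (bidiagR N Qb Eb * (bidiagR N Q E)⁻¹) i i
        = Real.sqrt (1 + δ * pVar δ Q Qb (i.1 + 1))) ∧
    (∀ i j : Fin N, i < j → (bidiagR N Qb Eb * (bidiagR N Q E)⁻¹) i j
        = δ * pVar δ Q Qb (i.1 + 1) / Real.sqrt (1 + δ * pVar δ Q Qb (i.1 + 1)) *
          Real.sqrt (pVar δ Q Qb (j.1 + 1) * Real.exp (x (j.1 + 1)) /
            (pVar δ Q Qb (i.1 + 1) * Real.exp (x (i.1 + 1))))) :=
  stmt12_general N δ hδ Q Qb E Eb hQ h2 hp x hx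
end

section
/- Let N ≥ 1 and let δ, δ' be positive reals. Let p_1,…,p_N and p'_1,…,p'_N be positive reals and x_1,…,x_N, x'_1,…,x'_N be reals. Define the N×N upper triangular matrix ℛ with diagonal entries √(1 + δ p_i) and, for j > i, entries ℛ_{ij} = (δ p_i/√(1 + δ p_i))·√(p_j e^{x_j}/(p_i e^{x_i})); set ℒ := ℛᵀ; and define ℛ', ℒ' analogously from δ', p'_i, x'_i. Assume (1/δ')(ℒ' ℛ' − I) = (1/δ)(ℛ ℒ − I). Then: (a) for every i = 1,…,N, p'_i + Σ_{j=1}^{i−1} δ' p'_j p'_i e^{x'_i − x'_j}/(1 + δ' p'_j) = p_i + Σ_{j=i+1}^{N} δ p_i p_j e^{x_j − x_i}/(1 + δ p_i); (b) there exists a constant C such that for every i = 1,…,N, (p'_i e^{x'_i}/(p_i e^{x_i}))·(1 + δ p_i)/(1 + δ Σ_{k=i}^{N} p_k e^{x_k − x_i})² = C. -/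
open Finset Matrix

noncomputable def calR (N : ℕ) (δ : ℝ) (p x : Fin N → ℝ) : Matrix (Fin N) (Fin N) ℝ :=
  Matrix.of fun i j =>
    if i = j then Real.sqrt (1 + δ * p i)
    else if i < j then
      δ * p i / Real.sqrt (1 + δ * p i) *
        Real.sqrt (p j * Real.exp (x j) / (p i * Real.exp (x i)))
    else 0

/-!
Write `w_k = p_k e^{x_k}` and `s_k = 1 + δ p_k`. For `i ≤ j` the entries of both sides of the
hypothesis factor: `(ℛℛᵀ - I)_{ij} / δ = u_i v_j` with `u_i = p_i / √(w_i s_i)` and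
`v_j = √w_j (1 + δ ∑_{k ≥ j} p_k e^{x_k - x_j}) / √s_j`, while `(ℒ'ℛ' - I)_{ij} / δ' = f'_i √w'_j`
with `f'_i = √w'_i (e^{-x'_i} + δ' ∑_{k < i} p'_k e^{-x'_k} / s'_k)`. Part (a) is the diagonal of
this identity. Comparing the entries `(i, i)` and `(i, j)` shows that `v_j / √w'_j` does not depend
on `j`, and the quantity in part (b) is the inverse square of this ratio.
-/

open Real

theorem exists_forall_div_eq_of_mul_eq {ι K : Type*} [LinearOrder ι] [Field K]
    {f g f' g' : ι → K} (hf : ∀ i, f i ≠ 0) (hg' : ∀ i, g' i ≠ 0)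
    (h : ∀ i j, i ≤ j → f i * g j = f' i * g' j) : ∃ c, ∀ i, g i / g' i = c := by
  have hle : ∀ i j, i ≤ j → g i / g' i = g j / g' j := fun i j hij => by
    rw [div_eq_div_iff (hg' i) (hg' j)]
    apply mul_left_cancel₀ (hf i)
    linear_combination g' j * h i i le_rfl - g' i * h i j hij
  rcases isEmpty_or_nonempty ι with hι | ⟨⟨i₀⟩⟩
  · exact ⟨0, fun i => isEmptyElim i⟩
  · exact ⟨g i₀ / g' i₀, fun i => ((le_total i i₀).elim (hle i i₀) fun h => (hle i₀ i h).symm)⟩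

theorem eq_of_smul_sub_one_eq {n K : Type*} [Field K] [DecidableEq n] {A B : Matrix n n K}
    {δ δ' a b : K} (hδ : δ ≠ 0) (hδ' : δ' ≠ 0) (h : (1 / δ') • (A - 1) = (1 / δ) • (B - 1))
    {i j : n} (hA : A i j = (1 : Matrix n n K) i j + δ' * a)
    (hB : B i j = (1 : Matrix n n K) i j + δ * b) : a = b := by
  have hij := congrFun (congrFun h i) j
  rwa [Matrix.smul_apply, Matrix.smul_apply, Matrix.sub_apply, Matrix.sub_apply, hA, hB,
    add_sub_cancel_left, add_sub_cancel_left, smul_eq_mul, smul_eq_mul, one_div, one_div,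
    inv_mul_cancel_left₀ hδ', inv_mul_cancel_left₀ hδ] at hij

section calR

variable {N : ℕ} {δ : ℝ} {p x : Fin N → ℝ}

theorem calR_apply_eq_zero_of_lt {i j : Fin N} (h : j < i) : calR N δ p x i j = 0 := by
  simp [calR, h.ne', h.not_gt]

theorem calR_apply_of_le {i j : Fin N} (hpi : 0 < p i) (hij : i ≤ j) :
    calR N δ p x i j = ((if i = j then 1 else 0) + δ * p i) / √(1 + δ * p i) *
      (√(p j * exp (x j)) / √(p i * exp (x i))) := by
  rcases hij.eq_or_lt with rfl | hij
  · have : √(p i * exp (x i)) ≠ 0 := by positivity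
    simp [calR, div_sqrt, this]
  · simp [calR, hij, hij.ne, sqrt_div' _ (by positivity : 0 ≤ p i * exp (x i))]

theorem calR_mul_transpose_apply_of_le (hδ : 0 ≤ δ) (hp : ∀ k, 0 < p k) {i j : Fin N}
    (hij : i ≤ j) :
    (calR N δ p x * (calR N δ p x)ᵀ) i j = (if i = j then 1 else 0) +
      δ * (p i / (√(p i * exp (x i)) * √(1 + δ * p i)) *
        (√(p j * exp (x j)) * (1 + δ * ∑ k ∈ univ.filter (fun k => j ≤ k), p k * exp (x k - x j))
          / √(1 + δ * p j))) := by
  have hw : ∀ k, 0 < p k * exp (x k) := fun k => mul_pos (hp k) (exp_pos _)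
  have hs : ∀ k, 0 < 1 + δ * p k := fun k => by have := hp k; positivity
  have hterm : ∀ k ∈ Ioi j, calR N δ p x i k * calR N δ p x j k =
      δ ^ 2 * p i * p j / (√(1 + δ * p i) * √(1 + δ * p j) *
        (√(p i * exp (x i)) * √(p j * exp (x j)))) * (p k * exp (x k)) := fun k hk => by
    have hjk : j < k := mem_Ioi.1 hk
    rw [calR_apply_of_le (hp i) (hij.trans hjk.le), calR_apply_of_le (hp j) hjk.le,
      if_neg (hij.trans_lt hjk).ne, if_neg hjk.ne]
    field_simp
    rw [sq_sqrt (hw k).le]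
    ring
  rw [mul_apply, ← sum_subset (subset_univ (Ici j)) fun k _ hk => by
      rw [transpose_apply, calR_apply_eq_zero_of_lt (not_le.1 (mem_Ici.not.1 hk)), mul_zero],
    ← add_sum_Ioi_eq_sum_Ici, filter_le_eq_Ici, ← add_sum_Ioi_eq_sum_Ici]
  simp only [transpose_apply]
  rw [sum_congr rfl hterm, ← mul_sum, calR_apply_of_le (hp i) hij, calR_apply_of_le (hp j) le_rfl]
  simp_rw [exp_sub, ← mul_div_assoc, ← sum_div]
  have : √(p i * exp (x i)) ≠ 0 := (sqrt_pos.2 (hw i)).ne'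
  have : √(p j * exp (x j)) ≠ 0 := (sqrt_pos.2 (hw j)).ne'
  have : √(1 + δ * p i) ≠ 0 := (sqrt_pos.2 (hs i)).ne'
  have : √(1 + δ * p j) ≠ 0 := (sqrt_pos.2 (hs j)).ne'
  split_ifs with h
  · subst h
    field_simp
    rw [sq_sqrt (hw i).le, sq_sqrt (hs i).le]
    ring
  · simp only [zero_add]
    field_simp
    rw [sq_sqrt (hw j).le]
    ring

theorem transpose_calR_mul_calR_apply_of_le (hδ : 0 ≤ δ) (hp : ∀ k, 0 < p k) {i j : Fin N}
    (hij : i ≤ j) :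
    ((calR N δ p x)ᵀ * calR N δ p x) i j = (if i = j then 1 else 0) +
      δ * (√(p i * exp (x i)) * (exp (-x i) +
        δ * ∑ k ∈ univ.filter (fun k => k < i), p k * exp (-x k) / (1 + δ * p k)) *
          √(p j * exp (x j))) := by
  have hw : ∀ k, 0 < p k * exp (x k) := fun k => mul_pos (hp k) (exp_pos _)
  have hs : ∀ k, 0 < 1 + δ * p k := fun k => by have := hp k; positivity
  have hterm : ∀ k ∈ Iio i, calR N δ p x k i * calR N δ p x k j =
      δ ^ 2 * (√(p i * exp (x i)) * √(p j * exp (x j))) *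
        (p k * exp (-x k) / (1 + δ * p k)) := fun k hk => by
    have hki : k < i := mem_Iio.1 hk
    rw [calR_apply_of_le (hp k) hki.le, calR_apply_of_le (hp k) (hki.trans_le hij).le,
      if_neg hki.ne, if_neg (hki.trans_le hij).ne, Real.exp_neg]
    have : √(p k * exp (x k)) ≠ 0 := (sqrt_pos.2 (hw k)).ne'
    have := (hs k).ne'
    have : √(1 + δ * p k) ≠ 0 := (sqrt_pos.2 (hs k)).ne'
    field_simp
    rw [sq_sqrt (hw k).le, sq_sqrt (hs k).le]
    ring
  rw [mul_apply, ← sum_subset (subset_univ (Iic i)) fun k _ hk => by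
      rw [transpose_apply, calR_apply_eq_zero_of_lt (not_le.1 (mem_Iic.not.1 hk)), zero_mul],
    ← sum_Iio_add_eq_sum_Iic, filter_gt_eq_Iio]
  simp only [transpose_apply]
  rw [sum_congr rfl hterm, ← mul_sum, calR_apply_of_le (hp i) le_rfl,
    calR_apply_of_le (hp i) hij, if_pos rfl, Real.exp_neg]
  have : √(p i * exp (x i)) ≠ 0 := (sqrt_pos.2 (hw i)).ne'
  have : √(1 + δ * p i) ≠ 0 := (sqrt_pos.2 (hs i)).ne'
  split_ifs with h
  · subst h
    field_simp
    rw [sq_sqrt (hw i).le, sq_sqrt (hs i).le]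
    ring
  · simp only [zero_add]
    field_simp
    rw [sq_sqrt (hw i).le, sq_sqrt (hs i).le]
    ring

theorem sqrt_mul_mul_sqrt_eq_add_sum_lt (δ : ℝ) {i : Fin N} (hpi : 0 ≤ p i) :
    √(p i * exp (x i)) * (exp (-x i) +
        δ * ∑ k ∈ univ.filter (fun k => k < i), p k * exp (-x k) / (1 + δ * p k)) *
      √(p i * exp (x i)) =
    p i + ∑ j ∈ univ.filter (fun j => j < i),
      δ * p j * p i * exp (x i - x j) / (1 + δ * p j) := by
  rw [mul_right_comm, mul_self_sqrt (by positivity), mul_add, mul_sum, mul_sum, mul_assoc,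
    ← exp_add, add_neg_cancel, exp_zero, mul_one]
  congr 1
  refine sum_congr rfl fun j _ => ?_
  rw [sub_eq_add_neg, exp_add]
  ring

theorem div_mul_div_eq_add_sum_gt (hδ : 0 ≤ δ) {i : Fin N} (hpi : 0 < p i) :
    p i / (√(p i * exp (x i)) * √(1 + δ * p i)) *
      (√(p i * exp (x i)) * (1 + δ * ∑ k ∈ univ.filter (fun k => i ≤ k), p k * exp (x k - x i))
        / √(1 + δ * p i)) =
    p i + ∑ j ∈ univ.filter (fun j => i < j),
      δ * p i * p j * exp (x j - x i) / (1 + δ * p i) := by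
  have hw : 0 < p i * exp (x i) := mul_pos hpi (exp_pos _)
  have hs : 0 < 1 + δ * p i := by positivity
  rw [filter_le_eq_Ici, ← add_sum_Ioi_eq_sum_Ici, sub_self, exp_zero, mul_one, filter_lt_eq_Ioi,
    ← sum_div]
  simp_rw [mul_assoc (δ * p i), ← mul_sum]
  have : √(p i * exp (x i)) ≠ 0 := (sqrt_pos.2 hw).ne'
  have : √(1 + δ * p i) ≠ 0 := (sqrt_pos.2 hs).ne'
  field_simp
  rw [sq_sqrt (by positivity)]
  ring

end calR

theorem stmt13_general (N : ℕ) (δ δ' : ℝ) (hδ : 0 < δ) (hδ' : 0 < δ')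
    (p p' x x' : Fin N → ℝ)
    (hp : ∀ i, 0 < p i) (hp' : ∀ i, 0 < p' i)
    (hyp : (1 / δ') • ((calR N δ' p' x')ᵀ * calR N δ' p' x' - (1 : Matrix (Fin N) (Fin N) ℝ))
      = (1 / δ) • (calR N δ p x * (calR N δ p x)ᵀ - (1 : Matrix (Fin N) (Fin N) ℝ))) :
    (∀ i : Fin N,
      p' i + ∑ j ∈ Finset.univ.filter (fun j => j < i),
          δ' * p' j * p' i * Real.exp (x' i - x' j) / (1 + δ' * p' j)
        = p i + ∑ j ∈ Finset.univ.filter (fun j => i < j),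
          δ * p i * p j * Real.exp (x j - x i) / (1 + δ * p i)) ∧
    (∃ C : ℝ, ∀ i : Fin N,
      p' i * Real.exp (x' i) / (p i * Real.exp (x i)) *
          ((1 + δ * p i) /
            (1 + δ * ∑ k ∈ Finset.univ.filter (fun k => i ≤ k),
              p k * Real.exp (x k - x i)) ^ 2)
        = C) := by
  have hentry := fun i j (hij : i ≤ j) => eq_of_smul_sub_one_eq hδ.ne' hδ'.ne' hyp
    (transpose_calR_mul_calR_apply_of_le hδ'.le hp' hij)
    (calR_mul_transpose_apply_of_le hδ.le hp hij)
  refine ⟨fun i => ?_, ?_⟩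
  · rw [← sqrt_mul_mul_sqrt_eq_add_sum_lt δ' (hp' i).le, ← div_mul_div_eq_add_sum_gt hδ.le (hp i)]
    exact hentry i i le_rfl
  · obtain ⟨c, hc⟩ := exists_forall_div_eq_of_mul_eq (fun i => by have := hp i; positivity)
      (fun i => by have := hp' i; positivity) fun i j hij => (hentry i j hij).symm
    refine ⟨(c ^ 2)⁻¹, fun i => ?_⟩
    have := hp i
    have := hp' i
    rw [← hc i, div_pow, div_pow, mul_pow, sq_sqrt (by positivity), sq_sqrt (by positivity),
      sq_sqrt (by positivity), inv_div, div_mul_div_comm, div_div_eq_mul_div]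

theorem stmt13 (N : ℕ) (hN : 1 ≤ N) (δ δ' : ℝ) (hδ : 0 < δ) (hδ' : 0 < δ')
    (p p' x x' : Fin N → ℝ)
    (hp : ∀ i, 0 < p i) (hp' : ∀ i, 0 < p' i)
    (hyp : (1 / δ') • ((calR N δ' p' x')ᵀ * calR N δ' p' x' - (1 : Matrix (Fin N) (Fin N) ℝ))
      = (1 / δ) • (calR N δ p x * (calR N δ p x)ᵀ - (1 : Matrix (Fin N) (Fin N) ℝ))) :
    (∀ i : Fin N,
      p' i + ∑ j ∈ Finset.univ.filter (fun j => j < i),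
          δ' * p' j * p' i * Real.exp (x' i - x' j) / (1 + δ' * p' j)
        = p i + ∑ j ∈ Finset.univ.filter (fun j => i < j),
          δ * p i * p j * Real.exp (x j - x i) / (1 + δ * p i)) ∧
    (∃ C : ℝ, ∀ i : Fin N,
      p' i * Real.exp (x' i) / (p i * Real.exp (x i)) *
          ((1 + δ * p i) /
            (1 + δ * ∑ k ∈ Finset.univ.filter (fun k => i ≤ k),
              p k * Real.exp (x k - x i)) ^ 2)
        = C) :=
  stmt13_general N δ δ' hδ hδ' p p' x x' hp hp' hyp
end

section
/- Let N ≥ 1 and let p_1,…,p_N, x_1,…,x_N : ℝ → ℝ be functions, each differentiable at a point t, with p_i(t) > 0 for all i. Suppose there exists ε > 0 such that for every δ ∈ (0, ε) and every i = 1,…,N the following two equations hold: p_i(t+δ) + Σ_{j=1}^{i−1} δ p_j(t+δ) p_i(t+δ) e^{x_i(t+δ) − x_j(t+δ)}/(1 + δ p_j(t+δ)) = p_i(t) + Σ_{j=i+1}^{N} δ p_i(t) p_j(t) e^{x_j(t) − x_i(t)}/(1 + δ p_i(t)), and e^{x_i(t+δ) − x_i(t)} = (p_i(t)/p_i(t+δ))·(1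 + δ Σ_{j=i}^{N} p_j(t) e^{x_j(t) − x_i(t)})²/(1 + δ p_i(t)). Then the Camassa–Holm peakon equations hold at t: p_i'(t) = −p_i(t) Σ_{j=1}^{i−1} p_j(t) e^{x_i(t) − x_j(t)} + p_i(t) Σ_{j=i+1}^{N} p_j(t) e^{x_j(t) − x_i(t)} and x_i'(t) = Σ_{j=1}^{i−1} p_j(t) e^{x_i(t) − x_j(t)} + p_i(t) + Σ_{j=i+1}^{N} p_j(t) e^{x_j(t) − x_i(t)} for i = 1,…,N. -/
/-!
Both discrete equations are implicit one-step schemes, so the theorem is a limit `δ → 0⁺`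
of difference quotients. The momentum equation says that `(p_i(t+δ) - p_i(t)) / δ` equals an
expression continuous in `δ` whose value at `δ = 0` is the right-hand side for `p_i'`. Taking
logarithms in the position equation gives `x_i(t+δ) - x_i(t) = log G(δ)` with `G(0) = 1`, so
`x_i'(t) = G'(0) = -p_i'/p_i + 2 ∑_{j ≥ i} p_j e^{x_j - x_i} - p_i`, which rearranges to the
peakon equation once `p_i'` is substituted.
-/

open Finset Filter Topology Real

theorem HasDerivAt.eq_of_eventually_sub_eq_mul {f q : ℝ → ℝ} {f' t L : ℝ} (hf : HasDerivAt f f' t)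
    (hq : Tendsto q (𝓝[>] 0) (𝓝 L)) (h : ∀ᶠ δ in 𝓝[>] 0, f (t + δ) - f t = δ * q δ) :
    f' = L :=
  tendsto_nhds_unique hf.tendsto_slope_zero_right <| hq.congr' <| by
    filter_upwards [h, self_mem_nhdsWithin] with δ hδ (hδ0 : 0 < δ)
    rw [hδ, smul_eq_mul, inv_mul_cancel_left₀ hδ0.ne']

theorem HasDerivAt.eq_of_eventually_sub_eq {f g : ℝ → ℝ} {f' g' t : ℝ} (hf : HasDerivAt f f' t)
    (hg : HasDerivAt g g' 0) (h : ∀ᶠ δ in 𝓝[>] 0, f (t + δ) - f t = g δ - g 0) : f' = g' :=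
  hf.eq_of_eventually_sub_eq_mul (by simpa using hg.tendsto_slope_zero_right) <| by
    filter_upwards [h, self_mem_nhdsWithin] with δ hδ (hδ0 : 0 < δ)
    rw [hδ, mul_inv_cancel_left₀ hδ0.ne']

theorem deriv_eq_of_eventually_exp_sub_eq {y G : ℝ → ℝ} {t G' : ℝ} (hy : DifferentiableAt ℝ y t)
    (hG : HasDerivAt G G' 0) (hG0 : G 0 = 1)
    (h : ∀ᶠ δ in 𝓝[>] 0, exp (y (t + δ) - y t) = G δ) : deriv y t = G' :=
  hy.hasDerivAt.eq_of_eventually_sub_eq (g := fun δ => log (G δ))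
    (by simpa [hG0] using hG.log (by simp [hG0])) <| by
      filter_upwards [h] with δ hδ
      rw [← hδ, log_exp, hG0, log_one, sub_zero]

theorem hasDerivAt_div_shift_mul_sq_div {f : ℝ → ℝ} {t S : ℝ} (hf : DifferentiableAt ℝ f t)
    (hft : f t ≠ 0) :
    HasDerivAt (fun δ => f t / f (t + δ) * (1 + δ * S) ^ 2 / (1 + δ * f t))
      (-(deriv f t / f t) + 2 * S - f t) 0 := by
  have hshift : HasDerivAt (fun δ => f (t + δ)) (deriv f t) 0 :=
    HasDerivAt.comp_const_add t 0 (by simpa using hf.hasDerivAt)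
  have hlin : ∀ c : ℝ, HasDerivAt (fun δ : ℝ => 1 + δ * c) c 0 := fun c => by
    simpa using ((hasDerivAt_id (0 : ℝ)).mul_const c).const_add 1
  refine ((((hasDerivAt_const (0 : ℝ) (f t)).fun_div hshift (by simpa)).fun_mul
    ((hlin S).fun_pow 2)).fun_div (hlin (f t)) (by simp)).congr_deriv ?_
  simp only [add_zero, zero_mul]
  field_simp
  ring

theorem deriv_eq_of_eventually_momentum_step {ι : Type*} {p x : ι → ℝ → ℝ} {t : ℝ} {i : ι}
    (L R : Finset ι) (hp : ∀ j, ContinuousAt (p j) t) (hx : ∀ j, ContinuousAt (x j) t)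
    (hpi : DifferentiableAt ℝ (p i) t)
    (h : ∀ᶠ δ in 𝓝[>] 0,
      p i (t + δ) + ∑ j ∈ L, δ * p j (t + δ) * p i (t + δ) *
          exp (x i (t + δ) - x j (t + δ)) / (1 + δ * p j (t + δ))
        = p i t + ∑ j ∈ R, δ * p i t * p j t * exp (x j t - x i t) / (1 + δ * p i t)) :
    deriv (p i) t = -(p i t) * ∑ j ∈ L, p j t * exp (x i t - x j t)
      + p i t * ∑ j ∈ R, p j t * exp (x j t - x i t) := by
  set F : ℝ → ℝ := fun δ =>
    (∑ j ∈ R, p i t * p j t * exp (x j t - x i t) / (1 + δ * p i t)) -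
      ∑ j ∈ L, p j (t + δ) * p i (t + δ) * exp (x i (t + δ) - x j (t + δ)) / (1 + δ * p j (t + δ))
  have hshift : ∀ g : ℝ → ℝ, ContinuousAt g t → ContinuousAt (fun δ => g (t + δ)) 0 :=
    fun g hg => hg.comp_of_eq (by fun_prop) (add_zero t)
  have hp0 := fun j => hshift _ (hp j)
  have hx0 := fun j => hshift _ (hx j)
  have hF : ContinuousAt F 0 :=
    (tendsto_finsetSum _ fun j _ => ContinuousAt.tendsto (by fun_prop (disch := simp))).sub
      (tendsto_finsetSum _ fun j _ => ContinuousAt.tendsto <|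
        (((hp0 j).mul (hp0 i)).mul ((hx0 i).sub (hx0 j)).rexp).div
          (continuousAt_const.add (continuousAt_id.mul (hp0 j))) (by simp))
  have hF0 : F 0 = -(p i t) * ∑ j ∈ L, p j t * exp (x i t - x j t)
      + p i t * ∑ j ∈ R, p j t * exp (x j t - x i t) := by
    simp only [F, add_zero, zero_mul, div_one]
    rw [neg_mul, neg_add_eq_sub, mul_sum, mul_sum]
    congr 1 <;> exact sum_congr rfl fun j _ => by ring
  rw [← hF0]
  refine hpi.hasDerivAt.eq_of_eventually_sub_eq_mul (hF.mono_left nhdsWithin_le_nhds) ?_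
  filter_upwards [h] with δ hδ
  simp only [F, mul_sub, mul_sum, mul_div_assoc', ← mul_assoc]
  linarith

theorem stmt14_general (N : ℕ) (p x : Fin N → ℝ → ℝ) (t : ℝ)
    (hpd : ∀ i, DifferentiableAt ℝ (p i) t)
    (hxd : ∀ i, DifferentiableAt ℝ (x i) t)
    (hpos : ∀ i, 0 < p i t)
    (hdisc : ∃ ε : ℝ, 0 < ε ∧ ∀ δ : ℝ, 0 < δ → δ < ε → ∀ i : Fin N,
      (p i (t + δ) + ∑ j ∈ Finset.univ.filter (fun j => j < i),
          δ * p j (t + δ) * p i (t + δ) *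
            Real.exp (x i (t + δ) - x j (t + δ)) / (1 + δ * p j (t + δ))
        = p i t + ∑ j ∈ Finset.univ.filter (fun j => i < j),
          δ * p i t * p j t * Real.exp (x j t - x i t) / (1 + δ * p i t)) ∧
      (Real.exp (x i (t + δ) - x i t)
        = p i t / p i (t + δ) *
          (1 + δ * ∑ j ∈ Finset.univ.filter (fun j => i ≤ j),
            p j t * Real.exp (x j t - x i t)) ^ 2 / (1 + δ * p i t))) :
    ∀ i : Fin N,
      (deriv (p i) t =
        -(p i t) * ∑ j ∈ Finset.univ.filter (fun j => j < i),
            p j t * Real.exp (x i t - x j t)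
          + p i t * ∑ j ∈ Finset.univ.filter (fun j => i < j),
            p j t * Real.exp (x j t - x i t)) ∧
      (deriv (x i) t =
        (∑ j ∈ Finset.univ.filter (fun j => j < i), p j t * Real.exp (x i t - x j t))
          + p i t
          + ∑ j ∈ Finset.univ.filter (fun j => i < j), p j t * Real.exp (x j t - x i t)) := by
  obtain ⟨ε, hε, hstep⟩ := hdisc
  intro i
  have hsmall : ∀ᶠ δ in 𝓝[>] (0 : ℝ), 0 < δ ∧ δ < ε := Ioo_mem_nhdsGT hε
  have hpi : p i t ≠ 0 := (hpos i).ne'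
  have hp' := deriv_eq_of_eventually_momentum_step _ _ (fun j => (hpd j).continuousAt)
    (fun j => (hxd j).continuousAt) (hpd i) (hsmall.mono fun δ hδ => (hstep δ hδ.1 hδ.2 i).1)
  have hx' := deriv_eq_of_eventually_exp_sub_eq (hxd i)
    (hasDerivAt_div_shift_mul_sq_div (hpd i) hpi) (by simp [hpi])
    (hsmall.mono fun δ hδ => (hstep δ hδ.1 hδ.2 i).2)
  refine ⟨hp', ?_⟩
  rw [hx', hp', filter_le_eq_Ici, Ici_eq_cons_Ioi, sum_cons, ← filter_lt_eq_Ioi, sub_self,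
    exp_zero, mul_one]
  field_simp [hpi]
  ring

theorem stmt14 (N : ℕ) (hN : 1 ≤ N) (p x : Fin N → ℝ → ℝ) (t : ℝ)
    (hpd : ∀ i, DifferentiableAt ℝ (p i) t)
    (hxd : ∀ i, DifferentiableAt ℝ (x i) t)
    (hpos : ∀ i, 0 < p i t)
    (hdisc : ∃ ε : ℝ, 0 < ε ∧ ∀ δ : ℝ, 0 < δ → δ < ε → ∀ i : Fin N,
      (p i (t + δ) + ∑ j ∈ Finset.univ.filter (fun j => j < i),
          δ * p j (t + δ) * p i (t + δ) *
            Real.exp (x i (t + δ) - x j (t + δ)) / (1 + δ * p j (t + δ))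
        = p i t + ∑ j ∈ Finset.univ.filter (fun j => i < j),
          δ * p i t * p j t * Real.exp (x j t - x i t) / (1 + δ * p i t)) ∧
      (Real.exp (x i (t + δ) - x i t)
        = p i t / p i (t + δ) *
          (1 + δ * ∑ j ∈ Finset.univ.filter (fun j => i ≤ j),
            p j t * Real.exp (x j t - x i t)) ^ 2 / (1 + δ * p i t))) :
    ∀ i : Fin N,
      (deriv (p i) t =
        -(p i t) * ∑ j ∈ Finset.univ.filter (fun j => j < i),
            p j t * Real.exp (x i t - x j t)
          + p i t * ∑ j ∈ Finset.univ.filter (fun j => i < j),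
            p j t * Real.exp (x j t - x i t)) ∧
      (deriv (x i) t =
        (∑ j ∈ Finset.univ.filter (fun j => j < i), p j t * Real.exp (x i t - x j t))
          + p i t
          + ∑ j ∈ Finset.univ.filter (fun j => i < j), p j t * Real.exp (x j t - x i t)) :=
  stmt14_general N p x t hpd hxd hpos hdisc
end
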